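/- arXiv:1710.07365 — 9 statements merged into one kernel-verified Lean document; each statement's English description precedes it below -/
import Mathlib

section
/- Let W_R, W_M be n×n stochastic weight matrices with zero diagonal. If for every nonempty proper subset S ⊂ V one has Σ_{i∉S}Σ_{j∈S} w^R_{ij} = Σ_{i∉S}Σ_{j∈S} w^M_{ji}, then both W_R and W_M are doubly stochastic and w^R_{ij} + w^R_{ji} = w^M_{ij} + w^M_{ji} for every pair i,j ∈ V. -/
/-!
Balancing the cut `S = {j}` compares the in-weight of `j` under `wR` with its out-weight under
`wM`, and `S = {j}ᶜ` compares the out-weight under `wR` with the in-weight under `wM`; with the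
row sums this gives double stochasticity. The cut `S = {i, j}ᶜ` counts the same row and column
sums, minus the weights between `i` and `j` themselves, so subtracting the singleton identities
leaves `wR i j + wR j i = wM i j + wM j i`.
-/

open Finset

section Isothermal

variable {V M : Type*} [Fintype V] [DecidableEq V] [AddCommGroup M]

theorem Finset.sum_compl_eq_sub (s : Finset V) (f : V → M) :
    ∑ x ∈ sᶜ, f x = ∑ x, f x - ∑ x ∈ s, f x :=
  eq_sub_of_add_eq (sum_compl_add_sum s f)

theorem Finset.nonempty_compl_iff (s : Finset V) : sᶜ.Nonempty ↔ s ≠ univ := by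
  rw [← compl_ne_univ_iff_nonempty, compl_compl]

def IsIsothermal (w v : V → V → M) : Prop :=
  ∀ S : Finset V, S.Nonempty → S ≠ univ → ∑ i ∈ Sᶜ, ∑ j ∈ S, w i j = ∑ i ∈ Sᶜ, ∑ j ∈ S, v j i

variable {w v : V → V → M}

namespace IsIsothermal

theorem sum_col_sub_diag (h : IsIsothermal w v) {j : V} (hj : ({j} : Finset V) ≠ univ) :
    ∑ i, w i j - w j j = ∑ i, v j i - v j j := by
  simpa only [sum_singleton, sum_compl_eq_sub] using h {j} (singleton_nonempty j) hj

theorem sum_row_sub_diag (h : IsIsothermal w v) {j : V} (hj : ({j} : Finset V) ≠ univ) :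
    ∑ i, w j i - w j j = ∑ i, v i j - v j j := by
  have hcut := h {j}ᶜ ((nonempty_compl_iff _).2 hj)
    ((compl_ne_univ_iff_nonempty _).2 (singleton_nonempty j))
  simpa only [compl_compl, sum_singleton, sum_compl_eq_sub] using hcut

theorem add_swap_eq (h : IsIsothermal w v) {i j : V} (hij : i ≠ j)
    (hV : ({i, j} : Finset V) ≠ univ) :
    w i j + w j i = v i j + v j i := by
  have hcut := h {i, j}ᶜ ((nonempty_compl_iff _).2 hV)
    ((compl_ne_univ_iff_nonempty _).2 (insert_nonempty i {j}))
  simp only [compl_compl, sum_pair hij, sum_compl_eq_sub] at hcut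
  have hi := h.sum_row_sub_diag (j := i) (ne_top_of_le_ne_top hV (by simp))
  have hj := h.sum_row_sub_diag (j := j) (ne_top_of_le_ne_top hV (by simp))
  linear_combination (norm := abel) hi + hj - hcut

end IsIsothermal

end Isothermal

theorem generalized_isothermal_necessary_general
    {V : Type*} [Fintype V] [DecidableEq V] (hcard : 3 ≤ Fintype.card V)
    (wR wM : V → V → ℝ)
    (hRdiag : ∀ i, wR i i = 0) (hMdiag : ∀ i, wM i i = 0)
    (hRrow : ∀ i, ∑ j, wR i j = 1) (hMrow : ∀ i, ∑ j, wM i j = 1)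
    (hbal : ∀ S : Finset V, S.Nonempty → S ≠ Finset.univ →
      ∑ i ∈ Sᶜ, ∑ j ∈ S, wR i j = ∑ i ∈ Sᶜ, ∑ j ∈ S, wM j i) :
    (∀ j, ∑ i, wR i j = 1) ∧ (∀ j, ∑ i, wM i j = 1) ∧
    (∀ i j, wR i j + wR j i = wM i j + wM j i) := by
  have hiso : IsIsothermal wR wM := hbal
  have hsingle (j : V) : ({j} : Finset V) ≠ univ :=
    (card_lt_iff_ne_univ _).1 (by rw [card_singleton]; omega)
  refine ⟨fun j => ?_, fun j => ?_, fun i j => ?_⟩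
  · simpa [hRdiag, hMdiag, hMrow] using hiso.sum_col_sub_diag (hsingle j)
  · simpa [hRdiag, hMdiag, hRrow] using (hiso.sum_row_sub_diag (hsingle j)).symm
  · rcases eq_or_ne i j with rfl | hij
    · rw [hRdiag, hMdiag]
    · exact hiso.add_swap_eq hij
        ((card_lt_iff_ne_univ _).1 ((card_le_two (a := i) (b := j)).trans_lt (by omega)))

/-- **Generalized Isothermal Theorem (necessity direction).**
Let `wR, wM` be stochastic weight matrices with zero diagonal on a vertex set with `n ≥ 3`.
If for every nonempty proper subset `S ⊂ V` one has
`Σ_{i∉S} Σ_{j∈S} wR i j = Σ_{i∉S} Σ_{j∈S} wM j i`,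
then both matrices are doubly stochastic and
`wR i j + wR j i = wM i j + wM j i` for every pair `i, j`. -/
theorem generalized_isothermal_necessary
    {V : Type*} [Fintype V] [DecidableEq V] (hcard : 3 ≤ Fintype.card V)
    (wR wM : V → V → ℝ)
    (hRnn : ∀ i j, 0 ≤ wR i j) (hMnn : ∀ i j, 0 ≤ wM i j)
    (hRdiag : ∀ i, wR i i = 0) (hMdiag : ∀ i, wM i i = 0)
    (hRrow : ∀ i, ∑ j, wR i j = 1) (hMrow : ∀ i, ∑ j, wM i j = 1)
    (hbal : ∀ S : Finset V, S.Nonempty → S ≠ Finset.univ →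
      ∑ i ∈ Sᶜ, ∑ j ∈ S, wR i j = ∑ i ∈ Sᶜ, ∑ j ∈ S, wM j i) :
    (∀ j, ∑ i, wR i j = 1) ∧ (∀ j, ∑ i, wM i j = 1) ∧
    (∀ i j, wR i j + wR j i = wM i j + wM j i) :=
  generalized_isothermal_necessary_general hcard wR wM hRdiag hMdiag hRrow hMrow hbal
end

section
/- For stochastic zero-diagonal matrices W_R, W_M: the conditions (a) W_R and W_M are doubly stochastic, and (b) w^R_{ij} + w^R_{ji} = w^M_{ij} + w^M_{ji} for all i,j, hold if and only if Σ_{i∉S}Σ_{j∈S} w^R_{ij} = Σ_{i∉S}Σ_{j∈S} w^M_{ji} for every nonempty proper subset S of V. -/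
/-!
The flow into `S` is `Σ_{j ∈ S} (column sum at j) - Σ_{i, j ∈ S} w i j`, and for the transposed
mutant matrix the column sums become row sums. Under (a) both sides are therefore `|S|` minus the
weight inside `S`, and (b) makes these inner weights agree. Conversely, the cut condition for
`S = {j}` gives the column sums of `W_R`, for `S = V \ {j}` those of `W_M`, and for `S = {i, j}`
(a proper subset because `n ≥ 3`) it gives (b).
-/

open Finset

theorem sum_sum_eq_of_add_swap_eq {ι K : Type*} [Field K] [CharZero K] {a b : ι → ι → K}
    (h : ∀ i j, a i j + a j i = b i j + b j i) (S : Finset ι) :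
    ∑ i ∈ S, ∑ j ∈ S, a i j = ∑ i ∈ S, ∑ j ∈ S, b i j := by
  have two_mul_eq : ∀ c : ι → ι → K,
      2 * ∑ i ∈ S, ∑ j ∈ S, c i j = ∑ i ∈ S, ∑ j ∈ S, (c i j + c j i) := by
    intro c
    rw [two_mul]
    nth_rewrite 2 [sum_comm]
    simp only [sum_add_distrib]
  have := two_mul_eq a
  rw [sum_congr rfl fun i _ => sum_congr rfl fun j _ => h i j, ← two_mul_eq b] at this
  exact mul_left_cancel₀ two_ne_zero this

section Inflow

variable {V M : Type*} [Fintype V] [DecidableEq V] [AddCommGroup M] (w : V → V → M)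

theorem sum_compl_sum_eq_sum_sub (S : Finset V) :
    ∑ i ∈ Sᶜ, ∑ j ∈ S, w i j = ∑ j ∈ S, ∑ i, w i j - ∑ i ∈ S, ∑ j ∈ S, w i j := by
  rw [eq_sub_iff_add_eq, sum_comm, sum_comm (s := S) (t := S), ← sum_add_distrib]
  exact sum_congr rfl fun j _ => sum_compl_add_sum S (w · j)

theorem sum_compl_sum_singleton (j : V) :
    ∑ i ∈ {j}ᶜ, ∑ k ∈ {j}, w i k = ∑ i, w i j - w j j := by
  simp only [sum_singleton, compl_singleton, sum_erase_eq_sub (mem_univ j)]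

theorem sum_compl_sum_compl_singleton (j : V) :
    ∑ i ∈ {j}ᶜᶜ, ∑ k ∈ {j}ᶜ, w i k = ∑ k, w j k - w j j := by
  rw [compl_compl, sum_singleton, compl_singleton, sum_erase_eq_sub (mem_univ j)]

theorem sum_compl_sum_pair {i j : V} (hij : i ≠ j) :
    ∑ k ∈ {i, j}ᶜ, ∑ l ∈ {i, j}, w k l =
      ∑ k, w k i + ∑ k, w k j - (w i i + w i j + (w j i + w j j)) := by
  rw [sum_compl_sum_eq_sum_sub]
  simp only [sum_pair hij]

end Inflow

theorem generalized_isothermal_iff_general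
    {V : Type*} [Fintype V] [DecidableEq V] (hcard : 3 ≤ Fintype.card V)
    (wR wM : V → V → ℝ)
    (hRdiag : ∀ i, wR i i = 0) (hMdiag : ∀ i, wM i i = 0)
    (hRrow : ∀ i, ∑ j, wR i j = 1) (hMrow : ∀ i, ∑ j, wM i j = 1) :
    ((∀ j, ∑ i, wR i j = 1) ∧ (∀ j, ∑ i, wM i j = 1) ∧
      (∀ i j, wR i j + wR j i = wM i j + wM j i)) ↔
    (∀ S : Finset V, S.Nonempty → S ≠ Finset.univ →
      ∑ i ∈ Sᶜ, ∑ j ∈ S, wR i j = ∑ i ∈ Sᶜ, ∑ j ∈ S, wM j i) := by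
  constructor
  · rintro ⟨hRcol, -, hsym⟩ S - -
    rw [sum_compl_sum_eq_sum_sub, sum_compl_sum_eq_sum_sub (fun i j => wM j i),
      sum_sum_eq_of_add_swap_eq (b := fun i j => wM j i) fun i j => (hsym i j).trans (add_comm _ _)]
    simp only [hRcol, hMrow]
  · intro hcut
    have hRcol (j : V) : ∑ i, wR i j = 1 := by
      have h := hcut {j} (singleton_nonempty j)
        ((card_lt_iff_ne_univ _).1 (by rw [card_singleton]; omega))
      rwa [sum_compl_sum_singleton, sum_compl_sum_singleton (fun i k => wM k i), hRdiag, hMdiag,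
        hMrow, sub_zero, sub_zero] at h
    have hMcol (j : V) : ∑ i, wM i j = 1 := by
      have h := hcut {j}ᶜ (card_pos.1 (by rw [card_compl, card_singleton]; omega))
        ((compl_ne_univ_iff_nonempty _).2 (singleton_nonempty j))
      rw [sum_compl_sum_compl_singleton, sum_compl_sum_compl_singleton (fun i k => wM k i),
        hRdiag, hMdiag, hRrow, sub_zero, sub_zero] at h
      exact h.symm
    refine ⟨hRcol, hMcol, fun i j => ?_⟩
    rcases eq_or_ne i j with rfl | hij
    · rw [hRdiag, hMdiag]
    have h := hcut {i, j} (insert_nonempty i {j})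
      ((card_lt_iff_ne_univ _).1 (card_le_two.trans_lt (by omega)))
    rw [sum_compl_sum_pair _ hij, sum_compl_sum_pair (fun k l => wM l k) hij] at h
    simp only [hRcol, hMrow, hRdiag, hMdiag] at h
    linarith

/-- **Generalized Isothermal Theorem (equivalence).**
For stochastic zero-diagonal weight matrices `wR, wM` on a vertex set with `n ≥ 3`:
(a) both matrices are doubly stochastic and (b) `wR i j + wR j i = wM i j + wM j i` for all
`i, j` — hold if and only if `Σ_{i∉S} Σ_{j∈S} wR i j = Σ_{i∉S} Σ_{j∈S} wM j i` for every
nonempty proper subset `S` of `V`. -/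
theorem generalized_isothermal_iff
    {V : Type*} [Fintype V] [DecidableEq V] (hcard : 3 ≤ Fintype.card V)
    (wR wM : V → V → ℝ)
    (hRnn : ∀ i j, 0 ≤ wR i j) (hMnn : ∀ i j, 0 ≤ wM i j)
    (hRdiag : ∀ i, wR i i = 0) (hMdiag : ∀ i, wM i i = 0)
    (hRrow : ∀ i, ∑ j, wR i j = 1) (hMrow : ∀ i, ∑ j, wM i j = 1) :
    ((∀ j, ∑ i, wR i j = 1) ∧ (∀ j, ∑ i, wM i j = 1) ∧
      (∀ i j, wR i j + wR j i = wM i j + wM j i)) ↔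
    (∀ S : Finset V, S.Nonempty → S ≠ Finset.univ →
      ∑ i ∈ Sᶜ, ∑ j ∈ S, wR i j = ∑ i ∈ Sᶜ, ∑ j ∈ S, wM j i) :=
  generalized_isothermal_iff_general hcard wR wM hRdiag hMdiag hRrow hMrow
end

section
/- Let f_{G_R,G_M}(r) denote the fixation probability of the two-graph Moran process with resident graph G_R, mutant graph G_M, and mutant relative fitness r > 0, started from a single uniformly random mutant. Then f_{G_R,G_M}(r) ≤ 1 − f_{G_M,G_R}(1/r). -/
open Finset

variable {V : Type*} [Fintype V] [DecidableEq V]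

/-- One-step transition probability of the two-graph Moran process with relative fitness `r`,
resident weight matrix `wR` and mutant weight matrix `wM`, from mutant set `S` to set `T`.
An individual is chosen with probability proportional to its fitness (residents `1`,
mutants `r`) and reproduces on a neighbour in its own graph. -/
noncomputable def moranStep (r : ℝ) (wR wM : V → V → ℝ) (S T : Finset V) : ℝ :=
  ((∑ i ∈ S, ∑ j ∈ Sᶜ, (if T = insert j S then r * wM i j else 0)) +
   (∑ j ∈ Sᶜ, ∑ i ∈ S, (if T = S.erase i then wR j i else 0)) +
   (if T = S then (∑ i ∈ S, ∑ j ∈ S, r * wM i j) + (∑ i ∈ Sᶜ, ∑ j ∈ Sᶜ, wR i j) else 0))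
  / (S.card * r + ((Fintype.card V : ℝ) - S.card))

/-- `t`-step transition probabilities of the two-graph Moran process. -/
noncomputable def moranIter (r : ℝ) (wR wM : V → V → ℝ) : ℕ → Finset V → Finset V → ℝ
  | 0 => fun S T => if T = S then 1 else 0
  | (t + 1) => fun S T => ∑ U : Finset V, moranStep r wR wM S U * moranIter r wR wM t U T

/-- Fixation probability of the two-graph Moran process started from mutant set `S`:
the probability of eventual absorption at the all-mutant state `V` (the probability of
being at the absorbing state `univ` is nondecreasing in `t`, so the limit is the `⨆`). -/
noncomputable def fixProbFrom (r : ℝ) (wR wM : V → V → ℝ) (S : Finset V) : ℝ :=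
  ⨆ t : ℕ, moranIter r wR wM t S Finset.univ

/-- Fixation probability of the two-graph Moran process started from a single
uniformly random mutant. -/
noncomputable def fixProb (r : ℝ) (wR wM : V → V → ℝ) : ℝ :=
  (∑ u : V, fixProbFrom r wR wM {u}) / (Fintype.card V)

/-- A weight matrix is a strongly connected graph structure: positive-weight edges
connect every ordered pair of vertices. -/
def StronglyConnectedW (w : V → V → ℝ) : Prop :=
  ∀ i j : V, Relation.ReflTransGen (fun a b => 0 < w a b) i j

/-- Admissible weight matrix: nonnegative, zero diagonal, rows sum to 1. -/
def IsWeightMatrix (w : V → V → ℝ) : Prop :=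
  (∀ i j, 0 ≤ w i j) ∧ (∀ i, w i i = 0) ∧ (∀ i, ∑ j, w i j = 1)

/-!
Replacing `S` by `Sᶜ` and `r` by `1 / r` swaps the roles of mutants and residents, so the
process `(G_M, G_R, 1 / r)` started from `Sᶜ` is the process `(G_R, G_M, r)` started from `S`
seen upside down: its fixation is the extinction of the latter, whence
`f^S(r) + f^{Sᶜ}_{G_M,G_R}(1 / r) ≤ 1`. Fixation probabilities are monotone in the initial
mutant set: after slowing the chain down so that every individual carries the same total rate
`r + 1`, a coupling of the reproduction events individual by individual shows that one step
preserves monotone functions. Averaging `f^{{u}}(r) ≤ 1 - f^{V∖{u}}(1 / r)` over `u` and using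
`f^{{v}}(1 / r) ≤ f^{V∖{σ v}}(1 / r)` for a fixed-point-free permutation `σ` gives the claim.
-/

open Filter Topology

namespace Matrix

variable {σ : Type*} [Fintype σ] [DecidableEq σ] {P : Matrix σ σ ℝ} {a b : σ}

noncomputable def absorptionProb (P : Matrix σ σ ℝ) (a x : σ) : ℝ :=
  ⨆ t : ℕ, (P ^ t) x a

lemma pow_succ_apply_eq_mulVec (P : Matrix σ σ ℝ) (t : ℕ) (x a : σ) :
    (P ^ (t + 1)) x a = (P *ᵥ fun y => (P ^ t) y a) x := by
  rw [pow_succ', mul_apply]; rfl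

section Stochastic

variable (hP : P ∈ rowStochastic ℝ σ) (ha : P a a = 1)
include hP ha

lemma monotone_pow_apply_of_absorbing (x : σ) : Monotone fun t => (P ^ t) x a := by
  refine monotone_nat_of_le_succ fun t => ?_
  have hPt := pow_mem hP t
  calc (P ^ t) x a = (P ^ t) x a * P a a := by rw [ha, mul_one]
    _ ≤ ∑ y, (P ^ t) x y * P y a :=
      single_le_sum (f := fun y => (P ^ t) x y * P y a)
        (fun y _ => mul_nonneg (hPt.1 x y) (hP.1 y a)) (mem_univ a)
    _ = (P ^ (t + 1)) x a := by rw [pow_succ, mul_apply]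

lemma tendsto_pow_apply_absorptionProb (x : σ) :
    Tendsto (fun t => (P ^ t) x a) atTop (𝓝 (absorptionProb P a x)) :=
  tendsto_atTop_ciSup (monotone_pow_apply_of_absorbing hP ha x)
    ⟨1, by rintro _ ⟨t, rfl⟩; exact le_one_of_mem_rowStochastic (pow_mem hP t)⟩

lemma pow_apply_le_absorptionProb (t : ℕ) (x : σ) : (P ^ t) x a ≤ absorptionProb P a x :=
  (monotone_pow_apply_of_absorbing hP ha x).ge_of_tendsto
    (tendsto_pow_apply_absorptionProb hP ha x) t

lemma absorptionProb_nonneg : 0 ≤ absorptionProb P a :=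
  fun x => ((pow_mem hP 0).1 x a).trans (pow_apply_le_absorptionProb hP ha 0 x)

lemma one_le_absorptionProb_self : 1 ≤ absorptionProb P a a :=
  (pow_apply_le_absorptionProb hP ha 0 a).trans_eq' (by simp)

lemma mulVec_absorptionProb : P *ᵥ absorptionProb P a = absorptionProb P a := by
  funext x
  refine tendsto_nhds_unique ?_ ((tendsto_pow_apply_absorptionProb hP ha x).comp
    (tendsto_add_atTop_nat 1))
  simp only [Function.comp_def, pow_succ_apply_eq_mulVec, mulVec, dotProduct]
  exact tendsto_finsetSum _ fun y _ =>
    (tendsto_pow_apply_absorptionProb hP ha y).const_mul (P x y)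

lemma absorptionProb_add_absorptionProb_le_one (hb : P b b = 1) (hab : a ≠ b) (x : σ) :
    absorptionProb P a x + absorptionProb P b x ≤ 1 := by
  refine le_of_tendsto' ((tendsto_pow_apply_absorptionProb hP ha x).add
    (tendsto_pow_apply_absorptionProb hP hb x)) fun t => ?_
  rw [← sum_pair hab, ← sum_row_of_mem_rowStochastic (pow_mem hP t) x]
  exact sum_le_sum_of_subset_of_nonneg (subset_univ _)
    fun y _ _ => (pow_mem hP t).1 x y

lemma monotone_absorptionProb [PartialOrder σ] (hmax : IsMax a)
    (hmono : ∀ φ : σ → ℝ, Monotone φ → Monotone (P *ᵥ φ)) :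
    Monotone (absorptionProb P a) := by
  have hpow : ∀ t, Monotone fun x => (P ^ t) x a := by
    intro t
    induction t with
    | zero =>
      intro x y hxy
      simp only [pow_zero, one_apply]
      by_cases hx : x = a
      · subst hx; simp [hmax.eq_of_le hxy]
      · rw [if_neg hx]; split_ifs <;> norm_num
    | succ t ih =>
      simpa only [pow_succ_apply_eq_mulVec] using hmono _ ih
  intro x y hxy
  exact le_of_tendsto_of_tendsto' (tendsto_pow_apply_absorptionProb hP ha x)
    (tendsto_pow_apply_absorptionProb hP ha y) fun t => hpow t hxy

end Stochastic

lemma absorptionProb_le_of_mulVec_le (hP : ∀ x y, 0 ≤ P x y) {g : σ → ℝ} (hg : 0 ≤ g)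
    (hga : 1 ≤ g a) (hPg : P *ᵥ g ≤ g) : absorptionProb P a ≤ g := by
  have hpow : ∀ t x, (P ^ t) x a ≤ g x := by
    intro t
    induction t with
    | zero =>
      intro x
      rw [pow_zero, one_apply]
      split_ifs with hx
      · exact hx ▸ hga
      · exact hg x
    | succ t ih =>
      intro x
      rw [pow_succ_apply_eq_mulVec]
      exact (sum_le_sum fun y _ => mul_le_mul_of_nonneg_left (ih y) (hP x y)).trans (hPg x)
  exact fun x => ciSup_le fun t => hpow t x

noncomputable def lazy (c : σ → ℝ) (P : Matrix σ σ ℝ) : Matrix σ σ ℝ :=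
  diagonal c * P + diagonal (1 - c)

lemma lazy_mulVec (c : σ → ℝ) (P : Matrix σ σ ℝ) (g : σ → ℝ) :
    lazy c P *ᵥ g = c * (P *ᵥ g) + (1 - c) * g := by
  ext x
  simp [lazy, add_mulVec, ← mulVec_mulVec, mulVec_diagonal]

lemma lazy_mem_rowStochastic (hP : P ∈ rowStochastic ℝ σ) {c : σ → ℝ} (hc0 : 0 ≤ c)
    (hc1 : c ≤ 1) : lazy c P ∈ rowStochastic ℝ σ := by
  refine ⟨fun x y => ?_, ?_⟩
  · have hdiag : 0 ≤ diagonal (1 - c) x y := by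
      rw [diagonal_apply]
      split_ifs
      · simpa using hc1 x
      · exact le_rfl
    simpa [lazy, diagonal_mul] using add_nonneg (mul_nonneg (hc0 x) (hP.1 x y)) hdiag
  · rw [lazy_mulVec, hP.2]
    ring

lemma lazy_apply_self_of_absorbing (c : σ → ℝ) (ha : P a a = 1) : lazy c P a a = 1 := by
  simp [lazy, diagonal_mul, ha]

lemma absorptionProb_lazy (hP : P ∈ rowStochastic ℝ σ) (ha : P a a = 1) {c : σ → ℝ}
    (hc0 : ∀ x, 0 < c x) (hc1 : c ≤ 1) : absorptionProb (lazy c P) a = absorptionProb P a := by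
  have hK := lazy_mem_rowStochastic hP (fun x => (hc0 x).le) hc1
  have hKa := lazy_apply_self_of_absorbing c ha
  apply le_antisymm
  · refine absorptionProb_le_of_mulVec_le hK.1 (absorptionProb_nonneg hP ha)
      (one_le_absorptionProb_self hP ha) (le_of_eq ?_)
    rw [lazy_mulVec, mulVec_absorptionProb hP ha]
    ring
  · refine absorptionProb_le_of_mulVec_le hP.1 (absorptionProb_nonneg hK hKa)
      (one_le_absorptionProb_self hK hKa) (le_of_eq ?_)
    funext x
    have h := congrFun (mulVec_absorptionProb hK hKa) x
    simp only [lazy_mulVec, Pi.add_apply, Pi.mul_apply, Pi.sub_apply, Pi.one_apply] at h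
    exact mul_left_cancel₀ (hc0 x).ne' (by linarith)

lemma submatrix_pow_equiv {τ : Type*} [Fintype τ] [DecidableEq τ] (P : Matrix σ σ ℝ) (e : τ ≃ σ)
    (t : ℕ) :
    (P ^ t).submatrix e e = P.submatrix e e ^ t := by
  induction t with
  | zero => simp [submatrix_one_equiv]
  | succ t ih => rw [pow_succ, pow_succ, ← ih, submatrix_mul_equiv]

end Matrix

open Matrix

noncomputable def totalFitness (r : ℝ) (S : Finset V) : ℝ :=
  S.card * r + ((Fintype.card V : ℝ) - S.card)

lemma totalFitness_eq (r : ℝ) (S : Finset V) : totalFitness r S = r * #S + #Sᶜ := by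
  rw [totalFitness, card_compl, Nat.cast_sub (card_le_univ S)]
  ring

noncomputable def moranMatrix (r : ℝ) (wR wM : V → V → ℝ) : Matrix (Finset V) (Finset V) ℝ :=
  of (moranStep r wR wM)

lemma moranIter_eq_pow (r : ℝ) (wR wM : V → V → ℝ) (t : ℕ) :
    moranIter r wR wM t = moranMatrix r wR wM ^ t := by
  induction t with
  | zero => funext S T; simp [moranIter, one_apply, eq_comm]
  | succ t ih => funext S T; simp [moranIter, pow_succ', mul_apply, ih, moranMatrix]

lemma fixProbFrom_eq_absorptionProb (r : ℝ) (wR wM : V → V → ℝ) :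
    fixProbFrom r wR wM = absorptionProb (moranMatrix r wR wM) univ := by
  funext S
  simp only [fixProbFrom, absorptionProb, moranIter_eq_pow]

lemma moranMatrix_mulVec (r : ℝ) (wR wM : V → V → ℝ) (φ : Finset V → ℝ) (S : Finset V) :
    (moranMatrix r wR wM *ᵥ φ) S =
      (r * ∑ a ∈ S, ∑ j, wM a j * φ (insert j S) + ∑ a ∈ Sᶜ, ∑ j, wR a j * φ (S.erase j)) /
        totalFitness r S := by
  simp only [mulVec, dotProduct, moranMatrix, of_apply, moranStep, div_mul_eq_mul_div,
    ← sum_div]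
  congr 1
  simp only [add_mul, sum_add_distrib, sum_mul, ite_mul, zero_mul]
  rw [sum_comm]
  simp only [sum_comm (s := (univ : Finset (Finset V))), sum_ite_eq', mem_univ, ↓reduceIte]
  have hM : ∀ a, ∑ j, wM a j * φ (insert j S) =
      ∑ j ∈ S, wM a j * φ S + ∑ j ∈ Sᶜ, wM a j * φ (insert j S) := fun a => by
    rw [← sum_add_sum_compl S]
    exact congrArg₂ _ (sum_congr rfl fun j hj => by rw [insert_eq_of_mem hj]) rfl
  have hR : ∀ a, ∑ j, wR a j * φ (S.erase j) =
      ∑ j ∈ S, wR a j * φ (S.erase j) + ∑ j ∈ Sᶜ, wR a j * φ S := fun a => by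
    rw [← sum_add_sum_compl S]
    exact congrArg₂ _ rfl
      (sum_congr rfl fun j hj => by rw [erase_eq_of_notMem (mem_compl.1 hj)])
  simp only [hM, hR, sum_add_distrib, mul_add, mul_sum, mul_assoc]
  ring

lemma moranMatrix_apply_eq_mulVec (r : ℝ) (wR wM : V → V → ℝ) (S T : Finset V) :
    moranMatrix r wR wM S T = (moranMatrix r wR wM *ᵥ Pi.single T 1) S := by
  simp

-- With this holding rate every individual carries the same total weight `r + 1` (its fitness
-- to reproduce, the rest to idle), so one step splits over individuals as in `moranSiteTerm`.
noncomputable def moranLazy (r : ℝ) (wR wM : V → V → ℝ) : Matrix (Finset V) (Finset V) ℝ :=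
  lazy (fun S => totalFitness r S / ((r + 1) * Fintype.card V)) (moranMatrix r wR wM)

noncomputable def moranSiteTerm (r : ℝ) (wR wM : V → V → ℝ) (φ : Finset V → ℝ) (S : Finset V)
    (a : V) : ℝ :=
  if a ∈ S then r * ∑ j, wM a j * φ (insert j S) + φ S
  else ∑ j, wR a j * φ (S.erase j) + r * φ S

lemma sum_moranSiteTerm (r : ℝ) (wR wM : V → V → ℝ) (φ : Finset V → ℝ) (S : Finset V) :
    ∑ a, moranSiteTerm r wR wM φ S a =
      r * ∑ a ∈ S, ∑ j, wM a j * φ (insert j S) + ∑ a ∈ Sᶜ, ∑ j, wR a j * φ (S.erase j) +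
        (r * #Sᶜ + #S) * φ S := by
  rw [← sum_add_sum_compl S]
  simp only [moranSiteTerm]
  rw [sum_congr rfl fun a ha => if_pos ha, sum_congr rfl fun a ha => if_neg (mem_compl.1 ha)]
  simp only [sum_add_distrib, mul_sum, sum_const, nsmul_eq_mul]
  ring

omit [DecidableEq V] in
lemma IsWeightMatrix.sum_mul_const {w : V → V → ℝ} (hw : IsWeightMatrix w) (a : V) (c : ℝ) :
    ∑ j, w a j * c = c := by
  rw [← sum_mul, hw.2.2 a, one_mul]

omit [DecidableEq V] in
lemma IsWeightMatrix.nontrivial [Nonempty V] {w : V → V → ℝ} (hw : IsWeightMatrix w) :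
    Nontrivial V := by
  obtain ⟨a⟩ := ‹Nonempty V›
  by_contra h
  have := hw.2.2 a
  rw [not_nontrivial_iff_subsingleton] at h
  rw [Fintype.sum_subsingleton _ a, hw.2.1 a] at this
  exact zero_ne_one this

section MoranProcess

variable {r : ℝ} {wR wM : V → V → ℝ}

lemma totalFitness_pos [Nonempty V] (hr : 0 < r) (S : Finset V) : 0 < totalFitness r S := by
  rw [totalFitness_eq]
  rcases S.eq_empty_or_nonempty with rfl | hS
  · simp [Fintype.card_pos]
  · exact add_pos_of_pos_of_nonneg (mul_pos hr (by exact_mod_cast hS.card_pos)) (by positivity)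

lemma totalFitness_div_mem_Ioc [Nonempty V] (hr : 0 < r) (S : Finset V) :
    totalFitness r S / ((r + 1) * Fintype.card V) ∈ Set.Ioc 0 1 := by
  have hcard : (#S : ℝ) + #Sᶜ = Fintype.card V := by exact_mod_cast card_add_card_compl S
  have hD : 0 < (r + 1) * Fintype.card V := by
    have : (0 : ℝ) < Fintype.card V := by exact_mod_cast Fintype.card_pos
    positivity
  refine ⟨div_pos (totalFitness_pos hr S) hD, (div_le_one hD).2 ?_⟩
  rw [totalFitness_eq, ← hcard]
  nlinarith [(#S).cast_nonneg (α := ℝ), (#Sᶜ).cast_nonneg (α := ℝ)]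

lemma moranMatrix_mem_rowStochastic [Nonempty V] (hr : 0 < r) (hwR : IsWeightMatrix wR)
    (hwM : IsWeightMatrix wM) : moranMatrix r wR wM ∈ rowStochastic ℝ (Finset V) := by
  refine ⟨fun S T => ?_, funext fun S => ?_⟩
  · rw [moranMatrix_apply_eq_mulVec, moranMatrix_mulVec]
    have hsingle : (0 : Finset V → ℝ) ≤ Pi.single T 1 := Pi.single_nonneg.2 zero_le_one
    refine div_nonneg (add_nonneg (mul_nonneg hr.le ?_) ?_) (totalFitness_pos hr S).le
    · exact sum_nonneg fun a _ => sum_nonneg fun j _ => mul_nonneg (hwM.1 a j) (hsingle _)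
    · exact sum_nonneg fun a _ => sum_nonneg fun j _ => mul_nonneg (hwR.1 a j) (hsingle _)
  · simp only [moranMatrix_mulVec, Pi.one_apply, mul_one, hwR.2.2, hwM.2.2, sum_const,
      nsmul_one, ← totalFitness_eq]
    exact div_self (totalFitness_pos hr S).ne'

lemma moranMatrix_univ_univ [Nonempty V] (hr : 0 < r) (hwM : IsWeightMatrix wM) :
    moranMatrix r wR wM univ univ = 1 := by
  rw [moranMatrix_apply_eq_mulVec, moranMatrix_mulVec]
  have hn : (0 : ℝ) < Fintype.card V := by exact_mod_cast Fintype.card_pos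
  simp [hwM.2.2, totalFitness, mul_comm r, hr.ne', hn.ne']

lemma moranMatrix_submatrix_compl (hr : r ≠ 0) :
    (moranMatrix (1 / r) wM wR).submatrix compl compl = moranMatrix r wR wM := by
  refine ext_iff_mulVec.2 fun φ => funext fun S => ?_
  have h := submatrix_mulVec_equiv (moranMatrix (1 / r) wM wR) φ compl
    (compl_involutive.toPerm _)
  simp only [Function.Involutive.coe_toPerm, Function.Involutive.toPerm_symm] at h
  rw [h]
  simp only [Function.comp_apply, moranMatrix_mulVec, totalFitness_eq, ← compl_erase,
    ← compl_insert, compl_compl]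
  rw [← mul_div_mul_left _ _ hr]
  congr 1 <;> field_simp <;> ring

lemma moranMatrix_pow_compl_compl (hr : r ≠ 0) (t : ℕ) (S T : Finset V) :
    (moranMatrix (1 / r) wM wR ^ t) Sᶜ Tᶜ = (moranMatrix r wR wM ^ t) S T := by
  have h := congrFun (congrFun
    (submatrix_pow_equiv (moranMatrix (1 / r) wM wR) (compl_involutive.toPerm _) t) S) T
  simpa only [submatrix_apply, Function.Involutive.coe_toPerm,
    moranMatrix_submatrix_compl hr] using h

lemma moranLazy_mulVec [Nonempty V] (hr : 0 < r) (φ : Finset V → ℝ) (S : Finset V) :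
    (moranLazy r wR wM *ᵥ φ) S =
      (∑ a, moranSiteTerm r wR wM φ S a) / ((r + 1) * Fintype.card V) := by
  have hfit := (totalFitness_pos hr S).ne'
  have hn : (0 : ℝ) < Fintype.card V := by exact_mod_cast Fintype.card_pos
  have hcard : (#S : ℝ) + #Sᶜ = Fintype.card V := by exact_mod_cast card_add_card_compl S
  rw [moranLazy, lazy_mulVec, sum_moranSiteTerm]
  simp only [Pi.add_apply, Pi.mul_apply, Pi.sub_apply, Pi.one_apply, moranMatrix_mulVec]
  rw [← hcard] at hn ⊢
  rw [totalFitness_eq] at hfit ⊢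
  field_simp
  ring

lemma moranSiteTerm_mono (hr : 0 ≤ r) (hwR : IsWeightMatrix wR) (hwM : IsWeightMatrix wM)
    {φ : Finset V → ℝ} (hφ : Monotone φ) {S T : Finset V} (hST : S ⊆ T) (a : V) :
    moranSiteTerm r wR wM φ S a ≤ moranSiteTerm r wR wM φ T a := by
  have hφST : φ S ≤ φ T := hφ hST
  by_cases haT : a ∈ T
  · have hM : φ T ≤ ∑ j, wM a j * φ (insert j T) := by
      rw [← hwM.sum_mul_const a (φ T)]
      exact sum_le_sum fun j _ =>
        mul_le_mul_of_nonneg_left (hφ (subset_insert j T)) (hwM.1 a j)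
    by_cases haS : a ∈ S
    · have hMS : ∑ j, wM a j * φ (insert j S) ≤ ∑ j, wM a j * φ (insert j T) :=
        sum_le_sum fun j _ =>
          mul_le_mul_of_nonneg_left (hφ (insert_subset_insert j hST)) (hwM.1 a j)
      simp only [moranSiteTerm, if_pos haS, if_pos haT]
      linarith [mul_le_mul_of_nonneg_left hMS hr]
    · -- `a` is a resident in `S` but a mutant in `T`: both terms are compared with `(1 + r) φ T`.
      have hR : ∑ j, wR a j * φ (S.erase j) ≤ φ T := by
        rw [← hwR.sum_mul_const a (φ T)]
        exact sum_le_sum fun j _ =>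
          mul_le_mul_of_nonneg_left (hφ ((erase_subset j S).trans hST)) (hwR.1 a j)
      simp only [moranSiteTerm, if_neg haS, if_pos haT]
      linarith [mul_le_mul_of_nonneg_left hM hr, mul_le_mul_of_nonneg_left hφST hr]
  · have haS : a ∉ S := fun h => haT (hST h)
    have hRS : ∑ j, wR a j * φ (S.erase j) ≤ ∑ j, wR a j * φ (T.erase j) :=
      sum_le_sum fun j _ => mul_le_mul_of_nonneg_left (hφ (erase_subset_erase j hST)) (hwR.1 a j)
    simp only [moranSiteTerm, if_neg haS, if_neg haT]
    linarith [mul_le_mul_of_nonneg_left hφST hr]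

lemma monotone_fixProbFrom [Nonempty V] (hr : 0 < r) (hwR : IsWeightMatrix wR)
    (hwM : IsWeightMatrix wM) : Monotone (fixProbFrom r wR wM) := by
  have hP := moranMatrix_mem_rowStochastic hr hwR hwM
  have hPu := moranMatrix_univ_univ (wR := wR) hr hwM
  have hc := totalFitness_div_mem_Ioc hr (V := V)
  have hK : moranLazy r wR wM ∈ rowStochastic ℝ (Finset V) :=
    lazy_mem_rowStochastic hP (fun S => (hc S).1.le) (fun S => (hc S).2)
  rw [fixProbFrom_eq_absorptionProb, ← absorptionProb_lazy hP hPu (fun S => (hc S).1)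
    (fun S => (hc S).2)]
  refine monotone_absorptionProb hK (lazy_apply_self_of_absorbing _ hPu)
    (fun T _ => subset_univ T) fun φ hφ S T hST => ?_
  simp only [moranLazy_mulVec hr]
  gcongr
  exact moranSiteTerm_mono hr.le hwR hwM hφ hST _

lemma fixProbFrom_add_fixProbFrom_compl_le_one [Nonempty V] (hr : 0 < r)
    (hwR : IsWeightMatrix wR) (hwM : IsWeightMatrix wM) (S : Finset V) :
    fixProbFrom r wR wM S + fixProbFrom (1 / r) wM wR Sᶜ ≤ 1 := by
  have hdual : fixProbFrom (1 / r) wM wR Sᶜ = absorptionProb (moranMatrix r wR wM) ∅ S := by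
    simp only [fixProbFrom_eq_absorptionProb, absorptionProb, ← compl_empty,
      moranMatrix_pow_compl_compl hr.ne']
  have hempty : moranMatrix r wR wM ∅ ∅ = 1 := by
    have h := moranMatrix_pow_compl_compl (wR := wR) (wM := wM) hr.ne' 1 ∅ ∅
    rwa [pow_one, pow_one, compl_empty, moranMatrix_univ_univ (one_div_pos.2 hr) hwR,
      eq_comm] at h
  rw [hdual, fixProbFrom_eq_absorptionProb]
  exact absorptionProb_add_absorptionProb_le_one (moranMatrix_mem_rowStochastic hr hwR hwM)
    (moranMatrix_univ_univ hr hwM) hempty univ_nonempty.ne_empty S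

end MoranProcess

lemma Equiv.Perm.exists_forall_apply_ne (α : Type*) [Fintype α] [Nontrivial α] :
    ∃ σ : Equiv.Perm α, ∀ x, σ x ≠ x := by
  let e := Fintype.equivFin α
  refine ⟨e.trans ((finRotate _).trans e.symm), fun x hx => ?_⟩
  have hrot : finRotate _ (e x) ≠ e x := Equiv.Perm.mem_support.1 <| by
    rw [support_finRotate_of_le Fintype.one_lt_card]
    exact mem_univ _
  rw [Equiv.trans_apply, Equiv.trans_apply, Equiv.symm_apply_eq] at hx
  exact hrot hx

lemma sum_singleton_le_sum_compl_singleton [Nontrivial V] {φ : Finset V → ℝ}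
    (hφ : Monotone φ) : ∑ v, φ {v} ≤ ∑ v, φ {v}ᶜ := by
  obtain ⟨σ, hσ⟩ := Equiv.Perm.exists_forall_apply_ne V
  calc ∑ v, φ {v} ≤ ∑ v, φ {σ v}ᶜ :=
        sum_le_sum fun v _ => hφ (by simpa [eq_comm] using hσ v)
    _ = ∑ v, φ {v}ᶜ := Equiv.sum_comp σ fun v => φ {v}ᶜ

theorem mirror_lemma_general
    {V : Type*} [Fintype V] [DecidableEq V] [Nonempty V]
    (r : ℝ) (hr : 0 < r) (wR wM : V → V → ℝ)
    (hwR : IsWeightMatrix wR) (hwM : IsWeightMatrix wM) :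
    fixProb r wR wM ≤ 1 - fixProb (1 / r) wM wR := by
  have : Nontrivial V := hwR.nontrivial
  have hn : (0 : ℝ) < Fintype.card V := by exact_mod_cast Fintype.card_pos
  have hpair (u : V) := fixProbFrom_add_fixProbFrom_compl_le_one hr hwR hwM {u}
  have hmono := sum_singleton_le_sum_compl_singleton
    (monotone_fixProbFrom (one_div_pos.2 hr) hwM hwR)
  rw [fixProb, fixProb, one_sub_div hn.ne']
  gcongr
  calc ∑ u, fixProbFrom r wR wM {u} ≤ ∑ u, (1 - fixProbFrom (1 / r) wM wR {u}ᶜ) :=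
        sum_le_sum fun u _ => by linarith [hpair u]
    _ ≤ Fintype.card V - ∑ u, fixProbFrom (1 / r) wM wR {u} := by
        rw [sum_sub_distrib, sum_const, card_univ, nsmul_one]
        linarith

/-- **Mirror lemma.** For the two-graph Moran process started from a single uniformly
random mutant, with strongly connected resident graph `wR` and mutant graph `wM` and
relative fitness `r > 0`, the fixation probability satisfies
`f_{G_R,G_M}(r) ≤ 1 − f_{G_M,G_R}(1/r)`. -/
theorem mirror_lemma
    {V : Type*} [Fintype V] [DecidableEq V] [Nonempty V]
    (r : ℝ) (hr : 0 < r) (wR wM : V → V → ℝ)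
    (hwR : IsWeightMatrix wR) (hwM : IsWeightMatrix wM)
    (hscR : StronglyConnectedW wR) (hscM : StronglyConnectedW wM) :
    fixProb r wR wM ≤ 1 - fixProb (1 / r) wM wR :=
  mirror_lemma_general r hr wR wM hwR hwM
end

section
/- Consider the birth-death chain on {0,1,...,n} modeling the Undirected Star vs Clique process restricted to leaf mutants: backward biases γ_k = 1/(r(n−k−1)) for 1 ≤ k ≤ n−2 and γ_{n−1} = 1/r. Then the absorption-at-n probability f starting from state 1 satisfies f ≥ 1/(1 + 1/(r(n−2)) + 1/(r²(n−3))) whenever r > ((n−4)!)^{−1/(n−2)} and n ≥ 5. -/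
/-!
Write `w k = 1 / γ k`, so that `f = 1 / (1 + ∑_{j=1}^{n-1} (w 1 ⋯ w j)⁻¹)`. The term `j = 1` is
`1 / (r (n - 2))`, and each of the remaining `n - 2` terms is at most
`1 / (w 1 w 2) = 1 / (r² (n - 2) (n - 3))`, because `w 3 ⋯ w j ≥ 1`. The last fact holds because
`w` is decreasing: a partial product of a decreasing nonnegative sequence is at least `1` as soon
as the full product is. Continuing `w` by `w n = r`, the full product `w 3 ⋯ w n` is
`r ^ (n - 2) (n - 4)!`, which exceeds `1` exactly by the hypothesis on `r`.
-/

open Finset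
open scoped Nat

theorem one_le_prod_Ico_of_antitone {R : Type*} [CommSemiring R] [LinearOrder R]
    [IsStrictOrderedRing R] {c : ℕ → R} (hc : ∀ i, 0 ≤ c i) (hanti : Antitone c)
    {a m M : ℕ} (ham : a ≤ m) (hmM : m ≤ M) (hM : 1 ≤ ∏ i ∈ Ico a M, c i) :
    1 ≤ ∏ i ∈ Ico a m, c i := by
  rcases le_or_gt 1 (c m) with hle | hlt
  · exact one_le_prod fun i hi ↦ hle.trans (hanti (mem_Ico.mp hi).2.le)
  · have htail : ∏ i ∈ Ico m M, c i ≤ 1 :=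
      prod_le_one (fun i _ ↦ hc i) fun i hi ↦ (hanti (mem_Ico.mp hi).1).trans hlt.le
    calc 1 ≤ ∏ i ∈ Ico a M, c i := hM
      _ = (∏ i ∈ Ico a m, c i) * ∏ i ∈ Ico m M, c i := (prod_Ico_consecutive c ham hmM).symm
      _ ≤ ∏ i ∈ Ico a m, c i := mul_le_of_le_one_right (prod_nonneg fun i _ ↦ hc i) htail

theorem sum_inv_prod_Icc_le_of_antitone {w : ℕ → ℝ} {M : ℕ} (hw : ∀ k, 0 ≤ w k)
    (hanti : Antitone w) (hw₂ : 0 < w 2) (hprod : 1 ≤ ∏ k ∈ Ico 3 (M + 2), w k) :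
    ∑ j ∈ Icc 1 M, (∏ k ∈ Icc 1 j, w k)⁻¹ ≤ (w 1)⁻¹ + (M - 1 : ℕ) * (w 1 * w 2)⁻¹ := by
  have hw₁₂ : 0 < w 1 * w 2 := mul_pos (hw₂.trans_le (hanti one_le_two)) hw₂
  have hterm : ∀ j ∈ Icc 2 M, (∏ k ∈ Icc 1 j, w k)⁻¹ ≤ (w 1 * w 2)⁻¹ := by
    intro j hj
    obtain ⟨h2j, hjM⟩ := mem_Icc.mp hj
    have htail : 1 ≤ ∏ k ∈ Ico 3 (j + 1), w k :=
      one_le_prod_Ico_of_antitone hw hanti (by omega) (by omega) hprod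
    have hsplit : ∏ k ∈ Icc 1 j, w k = w 1 * w 2 * ∏ k ∈ Ico 3 (j + 1), w k := by
      rw [← Ico_add_one_right_eq_Icc, ← prod_Ico_consecutive w (by omega : 1 ≤ 3) (by omega)]
      simp [prod_Ico_succ_top]
    rw [hsplit]
    exact inv_anti₀ hw₁₂ (le_mul_of_one_le_right hw₁₂.le htail)
  have hsub : Icc 1 M ⊆ insert 1 (Icc 2 M) := by
    intro j
    simp only [mem_Icc, mem_insert]
    omega
  calc ∑ j ∈ Icc 1 M, (∏ k ∈ Icc 1 j, w k)⁻¹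
      ≤ ∑ j ∈ insert 1 (Icc 2 M), (∏ k ∈ Icc 1 j, w k)⁻¹ :=
        sum_le_sum_of_subset_of_nonneg hsub fun j _ _ ↦ inv_nonneg.mpr (prod_nonneg fun k _ ↦ hw k)
    _ = (w 1)⁻¹ + ∑ j ∈ Icc 2 M, (∏ k ∈ Icc 1 j, w k)⁻¹ := by simp
    _ ≤ (w 1)⁻¹ + (M - 1 : ℕ) * (w 1 * w 2)⁻¹ := by
        gcongr
        simpa using sum_le_card_nsmul _ _ _ hterm

theorem Nat.prod_range_max_sub_one_eq_factorial (N : ℕ) :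
    ∏ i ∈ range (N + 2), max (N - i) 1 = N ! := by
  induction N with
  | zero => decide
  | succ N ih =>
    rw [prod_range_succ', Nat.factorial_succ, ← ih, mul_comm]
    simp

theorem one_lt_pow_mul_of_rpow_lt {a b : ℝ} {p : ℕ} (ha : 0 < a) (hp : p ≠ 0)
    (h : a ^ (-1 / (p : ℝ)) < b) : 1 < b ^ p * a := by
  have hpow : a⁻¹ < b ^ p := by
    calc a⁻¹ = (a ^ (-1 / (p : ℝ))) ^ p := by
          rw [neg_div, Real.rpow_neg ha.le, inv_pow, one_div, Real.rpow_inv_natCast_pow ha.le hp]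
      _ < b ^ p := pow_lt_pow_left₀ h (Real.rpow_nonneg ha.le _) hp
  exact (inv_lt_iff_one_lt_mul₀ ha).mp hpow

/-- `1 / γ k` for `1 ≤ k ≤ n - 1`, continued by `r` for `k ≥ n - 1`, which keeps it antitone. -/
def starCliqueRatio (n : ℕ) (r : ℝ) (k : ℕ) : ℝ := r * (max (n - k - 1) 1 : ℕ)

section starCliqueRatio

variable {n : ℕ} {r : ℝ}

theorem starCliqueRatio_nonneg (hr : 0 ≤ r) (k : ℕ) : 0 ≤ starCliqueRatio n r k := by
  unfold starCliqueRatio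
  positivity

theorem starCliqueRatio_antitone (hr : 0 ≤ r) : Antitone (starCliqueRatio n r) := by
  intro k l hkl
  unfold starCliqueRatio
  gcongr

theorem starCliqueRatio_of_add_two_le {k : ℕ} (hk : k + 2 ≤ n) :
    starCliqueRatio n r k = r * ((n : ℝ) - k - 1) := by
  rw [starCliqueRatio, max_eq_left (by omega), Nat.cast_sub (by omega), Nat.cast_sub (by omega)]
  simp

theorem starCliqueRatio_sub_one : starCliqueRatio n r (n - 1) = r := by
  simp [starCliqueRatio, show n - (n - 1) - 1 = 0 by omega]

theorem prod_Ico_three_starCliqueRatio (hn : 4 ≤ n) :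
    ∏ k ∈ Ico 3 (n + 1), starCliqueRatio n r k = r ^ (n - 2) * ((n - 4) ! : ℕ) := by
  obtain ⟨N, rfl⟩ : ∃ N, n = N + 4 := ⟨n - 4, by omega⟩
  rw [prod_Ico_eq_prod_range, show N + 4 + 1 - 3 = N + 2 by omega,
    show N + 4 - 2 = N + 2 by omega, show N + 4 - 4 = N by omega,
    ← Nat.prod_range_max_sub_one_eq_factorial]
  simp only [starCliqueRatio, prod_mul_distrib, prod_const, card_range, Nat.cast_prod]
  congr 2 with i
  congr 2
  omega

theorem one_le_prod_Ico_three_starCliqueRatio (hn : 4 ≤ n)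
    (hr : ((n - 4) ! : ℝ) ^ (-(1 : ℝ) / ((n : ℝ) - 2)) < r) :
    1 ≤ ∏ k ∈ Ico 3 (n + 1), starCliqueRatio n r k := by
  rw [prod_Ico_three_starCliqueRatio hn]
  refine (one_lt_pow_mul_of_rpow_lt (by positivity) (by omega) ?_).le
  rwa [Nat.cast_sub (by omega), Nat.cast_two]

theorem sum_prod_eq_sum_inv_prod_starCliqueRatio {γ : ℕ → ℝ}
    (hγ : ∀ k, 1 ≤ k → k ≤ n - 2 → γ k = 1 / (r * ((n : ℝ) - k - 1)))
    (hγlast : γ (n - 1) = 1 / r) :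
    ∑ j ∈ Icc 1 (n - 1), ∏ k ∈ Icc 1 j, γ k
      = ∑ j ∈ Icc 1 (n - 1), (∏ k ∈ Icc 1 j, starCliqueRatio n r k)⁻¹ := by
  have hγinv : ∀ k ∈ Icc 1 (n - 1), γ k = (starCliqueRatio n r k)⁻¹ := by
    intro k hk
    obtain ⟨h1k, hkn⟩ := mem_Icc.mp hk
    rcases lt_or_eq_of_le hkn with hlt | rfl
    · rw [hγ k h1k (by omega), starCliqueRatio_of_add_two_le (by omega), one_div]
    · rw [hγlast, starCliqueRatio_sub_one, one_div]
  refine sum_congr rfl fun j hj ↦ ?_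
  rw [← prod_inv_distrib]
  exact prod_congr rfl fun k hk ↦ hγinv k (Icc_subset_Icc_right (mem_Icc.mp hj).2 hk)

end starCliqueRatio

/-- **Star vs Clique birth-death bound.**
For the birth-death chain on `{0,...,n}` modeling the Undirected Star vs Clique process
restricted to leaf mutants, with backward biases `γ k = 1/(r(n−k−1))` for `1 ≤ k ≤ n−2`
and `γ (n−1) = 1/r`, the absorption-at-`n` probability starting from state `1`,
`f = 1/(1 + Σ_{j=1}^{n−1} Π_{k=1}^{j} γ k)`, satisfies
`f ≥ 1/(1 + 1/(r(n−2)) + 1/(r²(n−3)))` whenever `r > ((n−4)!)^{−1/(n−2)}` and `n ≥ 5`. -/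
theorem star_vs_clique_lower_bound
    (n : ℕ) (hn : 5 ≤ n) (r : ℝ)
    (hr : r > ((Nat.factorial (n - 4) : ℝ)) ^ (-(1 : ℝ) / ((n : ℝ) - 2)))
    (γ : ℕ → ℝ)
    (hγ : ∀ k, 1 ≤ k → k ≤ n - 2 → γ k = 1 / (r * ((n : ℝ) - k - 1)))
    (hγlast : γ (n - 1) = 1 / r)
    (f : ℝ)
    (hf : f = 1 / (1 + ∑ j ∈ Finset.Icc 1 (n - 1), ∏ k ∈ Finset.Icc 1 j, γ k)) :
    f ≥ 1 / (1 + 1 / (r * ((n : ℝ) - 2)) + 1 / (r ^ 2 * ((n : ℝ) - 3))) := by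
  have hr0 : 0 < r := (Real.rpow_pos_of_pos (by positivity) _).trans hr
  have hn' : (5 : ℝ) ≤ n := by exact_mod_cast hn
  have hw₁ : starCliqueRatio n r 1 = r * (n - 2) := by
    rw [starCliqueRatio_of_add_two_le (by omega)]; ring
  have hw₂ : starCliqueRatio n r 2 = r * (n - 3) := by
    rw [starCliqueRatio_of_add_two_le (by omega)]; ring
  have hprod := one_le_prod_Ico_three_starCliqueRatio (by omega) hr
  rw [show n + 1 = n - 1 + 2 by omega] at hprod
  have hbound := sum_inv_prod_Icc_le_of_antitone (starCliqueRatio_nonneg hr0.le)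
    (starCliqueRatio_antitone hr0.le) (by rw [hw₂]; nlinarith) hprod
  rw [hw₁, hw₂, show n - 1 - 1 = n - 2 by omega, Nat.cast_sub (by omega), Nat.cast_two] at hbound
  have hS : 0 ≤ ∑ j ∈ Icc 1 (n - 1), (∏ k ∈ Icc 1 j, starCliqueRatio n r k)⁻¹ :=
    sum_nonneg fun j _ ↦ inv_nonneg.mpr (prod_nonneg fun k _ ↦ starCliqueRatio_nonneg hr0.le k)
  rw [hf, sum_prod_eq_sum_inv_prod_starCliqueRatio hγ hγlast, ge_iff_le]
  refine one_div_le_one_div_of_le (by linarith) ?_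
  calc _ ≤ 1 + ((r * (n - 2))⁻¹ + (n - 2) * (r * (n - 2) * (r * (n - 3)))⁻¹) := by linarith
    _ = 1 + 1 / (r * ((n : ℝ) - 2)) + 1 / (r ^ 2 * ((n : ℝ) - 3)) := by
      have : (n : ℝ) - 3 ≠ 0 := by linarith
      have : (n : ℝ) - 2 ≠ 0 := by linarith
      field_simp
      ring
end

section
/- Consider the birth-death chain on {0,1,...,n} modeling the Clique vs Undirected Star process: backward biases γ_1 = 1/r and γ_k = (k−1)/r for 2 ≤ k ≤ n−1. Then the absorption-at-n probability starting from state 1 equals 1/(1 + (1/r) + (1/r²) + Σ_{k=3}^{n−1}(k−2)!/r^k · r) and in particular is at most r^{n−1}/(n−2)!. -/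
open Finset

theorem prod_Icc_one_eq_factorial_div_pow {γ : ℕ → ℝ} {r : ℝ} {m : ℕ} (hγ1 : γ 1 = 1 / r)
    (hγ : ∀ k, 2 ≤ k → k ≤ m → γ k = ((k : ℝ) - 1) / r) {j : ℕ} (hj : 1 ≤ j) (hjm : j ≤ m) :
    ∏ k ∈ Icc 1 j, γ k = ((j - 1).factorial : ℝ) / r ^ j := by
  induction j, hj using Nat.le_induction with
  | base => simp [hγ1]
  | succ j hj ih =>
    obtain ⟨i, rfl⟩ : ∃ i, j = i + 1 := ⟨j - 1, by omega⟩
    rw [prod_Icc_succ_top (by omega), ih (by omega), hγ (i + 2) (by omega) hjm]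
    simp only [Nat.add_sub_cancel, Nat.factorial_succ]
    push_cast
    ring

theorem one_div_one_add_sum_le_one_div {ι : Type*} {s : Finset ι} {g : ι → ℝ}
    (hg : ∀ i ∈ s, 0 ≤ g i) {i : ι} (hi : i ∈ s) (hgi : 0 < g i) :
    1 / (1 + ∑ j ∈ s, g j) ≤ 1 / g i := by
  have : g i ≤ 1 + ∑ j ∈ s, g j := by linarith [single_le_sum hg hi]
  exact one_div_le_one_div_of_le hgi this

/-- **Clique vs Star birth-death formula.**
For the birth-death chain on `{0,...,n}` modeling the Clique vs Undirected Star process,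
with backward biases `γ 1 = 1/r` and `γ k = (k−1)/r` for `2 ≤ k ≤ n−1`, the
absorption-at-`n` probability starting from state `1` equals
`1/(1 + Σ_{j=1}^{n−1} (j−1)!/r^j)` and in particular is at most `r^{n−1}/(n−2)!`. -/
theorem clique_vs_star_upper_bound
    (n : ℕ) (hn : 3 ≤ n) (r : ℝ) (hr : 0 < r) (γ : ℕ → ℝ)
    (hγ1 : γ 1 = 1 / r)
    (hγ : ∀ k, 2 ≤ k → k ≤ n - 1 → γ k = ((k : ℝ) - 1) / r)
    (f : ℝ)
    (hf : f = 1 / (1 + ∑ j ∈ Finset.Icc 1 (n - 1), ∏ k ∈ Finset.Icc 1 j, γ k)) :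
    f = 1 / (1 + ∑ j ∈ Finset.Icc 1 (n - 1), ((Nat.factorial (j - 1) : ℝ)) / r ^ j) ∧
    f ≤ r ^ (n - 1) / ((Nat.factorial (n - 2) : ℝ)) := by
  have hformula : f = 1 / (1 + ∑ j ∈ Icc 1 (n - 1), ((j - 1).factorial : ℝ) / r ^ j) := by
    rw [hf, sum_congr rfl fun j hj => prod_Icc_one_eq_factorial_div_pow hγ1 hγ
      (mem_Icc.1 hj).1 (mem_Icc.1 hj).2]
  refine ⟨hformula, ?_⟩
  have hlast : n - 1 ∈ Icc 1 (n - 1) := mem_Icc.2 ⟨by omega, le_rfl⟩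
  calc f ≤ 1 / (((n - 1 - 1).factorial : ℝ) / r ^ (n - 1)) :=
        hformula ▸ one_div_one_add_sum_le_one_div (fun _ _ => by positivity) hlast (by positivity)
    _ = r ^ (n - 1) / ((n - 2).factorial : ℝ) := by rw [one_div_div, Nat.sub_sub]
end

section
/- For every constant r > 0, there exists a pair of strongly connected graphs (G_R, G_M) on n vertices such that the fixation probability of the two-graph Moran process is o(a^{−n}) for some constant a > 1; namely G_R the complete graph and G_M the undirected star gives fixation probability at most r^{n−1}/(n−2)!. -/
open Finset

variable {V : Type*} [Fintype V] [DecidableEq V]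

/-- Clique weight matrix on `Fin n`: every vertex reproduces uniformly on the others. -/
noncomputable def cliqueW (n : ℕ) : Fin n → Fin n → ℝ :=
  fun i j => if i = j then 0 else 1 / ((n : ℝ) - 1)

/-- Undirected star weight matrix on `Fin n` with center `0`: the center reproduces
uniformly on the leaves, each leaf reproduces on the center. -/
noncomputable def starW (n : ℕ) (hn : 2 ≤ n) : Fin n → Fin n → ℝ :=
  fun i j =>
    if i = (⟨0, by omega⟩ : Fin n) then (if j = i then 0 else 1 / ((n : ℝ) - 1))
    else (if j = (⟨0, by omega⟩ : Fin n) then 1 else 0)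

/-!
The paper dominates the process by one where the initial mutant sits at the centre and residents
may replace the mutant centre only once all leaves are resident. Its mutant count is the
birth–death chain with biases `γ_1 = 1/r`, `γ_k = (k-1)/r`, absorbed at `n` from `k` with
probability `P_k / P_n`, where `π_j = γ_1 ⋯ γ_j` and `P_k = π_0 + ⋯ + π_{k-1}`.

Instead of a coupling we use this as a potential: `S ↦ P_{ρ(S)}` has nonpositive drift under the
clique–star process, where `ρ(S) = |S|` except that a resident centre with at least two mutant
leaves counts as one more mutant (then a leaf mutant taking the centre leaves `ρ` unchanged, and
every other move lowers it). Being nonnegative and equal to `P_n` on the full set, it bounds the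
fixation probability from any single mutant by `P_1 / P_n = 1 / P_n ≤ 1 / π_{n-1}`, which is
`r^{n-1}/(n-2)!` and decays faster than any exponential.
-/

/-- The generator of the Moran chain applied to `φ`, multiplied by the total fitness. -/
noncomputable def moranDrift (r : ℝ) (wR wM : V → V → ℝ) (φ : Finset V → ℝ) (S : Finset V) : ℝ :=
  ∑ i ∈ S, ∑ j ∈ Sᶜ, r * wM i j * (φ (insert j S) - φ S) +
    ∑ j ∈ Sᶜ, ∑ i ∈ S, wR j i * (φ (S.erase i) - φ S)

section MoranChain

variable {r : ℝ} {wR wM : V → V → ℝ}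

lemma sum_moranStep_mul (φ : Finset V → ℝ) (S : Finset V) :
    ∑ T, moranStep r wR wM S T * φ T =
      (∑ i ∈ S, ∑ j ∈ Sᶜ, r * wM i j * φ (insert j S) +
        ∑ j ∈ Sᶜ, ∑ i ∈ S, wR j i * φ (S.erase i) +
        (∑ i ∈ S, ∑ j ∈ S, r * wM i j + ∑ i ∈ Sᶜ, ∑ j ∈ Sᶜ, wR i j) * φ S) /
      (S.card * r + ((Fintype.card V : ℝ) - S.card)) := by
  simp only [moranStep, div_mul_eq_mul_div, ← sum_div, add_mul, sum_add_distrib, sum_mul,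
    ite_mul, zero_mul]
  rw [sum_comm (s := univ), sum_comm (s := univ)]
  congr 3
  · refine sum_congr rfl fun i _ => ?_
    rw [sum_comm]; simp
  · refine sum_congr rfl fun i _ => ?_
    rw [sum_comm]; simp
  · simp

lemma card_mul_add_card_sub_pos {α : Type*} [Fintype α] [Nonempty α] {r : ℝ} (hr : 0 < r)
    (S : Finset α) : 0 < (S.card : ℝ) * r + ((Fintype.card α : ℝ) - S.card) := by
  rcases S.eq_empty_or_nonempty with rfl | hS
  · simp [Fintype.card_pos]
  · have h1 : (1 : ℝ) ≤ S.card := by exact_mod_cast hS.card_pos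
    have h2 : (S.card : ℝ) ≤ Fintype.card α := by exact_mod_cast card_le_univ S
    nlinarith

lemma sum_moranStep_mul_eq_add_drift [Nonempty V] (hr : 0 < r)
    (hR : ∀ i, ∑ j, wR i j = 1) (hM : ∀ i, ∑ j, wM i j = 1) (φ : Finset V → ℝ) (S : Finset V) :
    ∑ T, moranStep r wR wM S T * φ T =
      φ S + moranDrift r wR wM φ S / (S.card * r + ((Fintype.card V : ℝ) - S.card)) := by
  have hD := (card_mul_add_card_sub_pos hr S).ne'
  have hMrows : ∑ i ∈ S, ∑ j ∈ S, r * wM i j + ∑ i ∈ S, ∑ j ∈ Sᶜ, r * wM i j = S.card * r := by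
    simp only [← sum_add_distrib, ← mul_sum, ← mul_add, sum_add_sum_compl, hM]
    simp [mul_comm]
  have hRrows : ∑ i ∈ Sᶜ, ∑ j ∈ S, wR i j + ∑ i ∈ Sᶜ, ∑ j ∈ Sᶜ, wR i j =
      Fintype.card V - S.card := by
    simp [← sum_add_distrib, sum_add_sum_compl, hR, card_compl, Nat.cast_sub (card_le_univ S)]
  rw [sum_moranStep_mul, add_div' _ _ _ hD]
  congr 1
  rw [← hMrows, ← hRrows]
  simp only [moranDrift, mul_sub, sum_sub_distrib, ← sum_mul]
  ring

lemma moranStep_nonneg (hr : 0 ≤ r) (hR : ∀ i j, 0 ≤ wR i j) (hM : ∀ i j, 0 ≤ wM i j)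
    (S T : Finset V) : 0 ≤ moranStep r wR wM S T := by
  have hsum : ∀ (s t : Finset V) (f : V → V → ℝ), (∀ i j, 0 ≤ f i j) →
      0 ≤ ∑ i ∈ s, ∑ j ∈ t, f i j :=
    fun s t f hf => sum_nonneg fun i _ => sum_nonneg fun j _ => hf i j
  have hD : (0 : ℝ) ≤ S.card * r + ((Fintype.card V : ℝ) - S.card) :=
    add_nonneg (mul_nonneg (Nat.cast_nonneg _) hr)
      (sub_nonneg.2 (by exact_mod_cast card_le_univ S))
  refine div_nonneg (add_nonneg (add_nonneg ?_ ?_) ?_) hD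
  · exact hsum _ _ _ fun i j => by
      split_ifs <;> first | exact le_rfl | exact mul_nonneg hr (hM i j)
  · exact hsum _ _ _ fun j i => by split_ifs <;> first | exact le_rfl | exact hR j i
  · split_ifs
    · exact add_nonneg (hsum _ _ _ fun i j => mul_nonneg hr (hM i j)) (hsum _ _ _ hR)
    · exact le_rfl

lemma moranIter_nonneg (hr : 0 ≤ r) (hR : ∀ i j, 0 ≤ wR i j) (hM : ∀ i j, 0 ≤ wM i j)
    (t : ℕ) (S T : Finset V) : 0 ≤ moranIter r wR wM t S T := by
  induction t generalizing S with
  | zero => simp only [moranIter]; positivity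
  | succ t ih => exact sum_nonneg fun U _ => mul_nonneg (moranStep_nonneg hr hR hM S U) (ih U)

lemma fixProb_nonneg (hr : 0 ≤ r) (hR : ∀ i j, 0 ≤ wR i j) (hM : ∀ i j, 0 ≤ wM i j) :
    0 ≤ fixProb r wR wM :=
  div_nonneg (sum_nonneg fun _ _ => Real.iSup_nonneg fun t => moranIter_nonneg hr hR hM t _ _)
    (Nat.cast_nonneg _)

lemma moranIter_univ_mul_le (hr : 0 ≤ r) (hR : ∀ i j, 0 ≤ wR i j) (hM : ∀ i j, 0 ≤ wM i j)
    {φ : Finset V → ℝ} (hφ : ∀ S, 0 ≤ φ S)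
    (hsup : ∀ S, ∑ T, moranStep r wR wM S T * φ T ≤ φ S) (t : ℕ) (S : Finset V) :
    moranIter r wR wM t S univ * φ univ ≤ φ S := by
  induction t generalizing S with
  | zero =>
    simp only [moranIter]
    split_ifs with h
    · rw [h, one_mul]
    · rw [zero_mul]; exact hφ S
  | succ t ih =>
    calc moranIter r wR wM (t + 1) S univ * φ univ
        = ∑ U, moranStep r wR wM S U * (moranIter r wR wM t U univ * φ univ) := by
          simp only [moranIter, sum_mul, mul_assoc]
      _ ≤ ∑ U, moranStep r wR wM S U * φ U :=
          sum_le_sum fun U _ => mul_le_mul_of_nonneg_left (ih U) (moranStep_nonneg hr hR hM S U)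
      _ ≤ φ S := hsup S

lemma fixProbFrom_le_div (hr : 0 ≤ r) (hR : ∀ i j, 0 ≤ wR i j) (hM : ∀ i j, 0 ≤ wM i j)
    {φ : Finset V → ℝ} (hφ : ∀ S, 0 ≤ φ S) (hφuniv : 0 < φ univ)
    (hsup : ∀ S, ∑ T, moranStep r wR wM S T * φ T ≤ φ S) (S : Finset V) :
    fixProbFrom r wR wM S ≤ φ S / φ univ :=
  ciSup_le fun t => (le_div_iff₀ hφuniv).2 (moranIter_univ_mul_le hr hR hM hφ hsup t S)

lemma fixProbFrom_le_div_of_drift_nonpos [Nonempty V] (hr : 0 < r)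
    (hR : ∀ i j, 0 ≤ wR i j) (hM : ∀ i j, 0 ≤ wM i j)
    (hR1 : ∀ i, ∑ j, wR i j = 1) (hM1 : ∀ i, ∑ j, wM i j = 1)
    {φ : Finset V → ℝ} (hφ : ∀ S, 0 ≤ φ S) (hφuniv : 0 < φ univ)
    (hdrift : ∀ S, moranDrift r wR wM φ S ≤ 0) (S : Finset V) :
    fixProbFrom r wR wM S ≤ φ S / φ univ := by
  refine fixProbFrom_le_div hr.le hR hM hφ hφuniv (fun S => ?_) S
  rw [sum_moranStep_mul_eq_add_drift hr hR1 hM1]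
  have := div_nonpos_of_nonpos_of_nonneg (hdrift S) (card_mul_add_card_sub_pos hr S).le
  linarith

lemma fixProb_le [Nonempty V] {b : ℝ} (h : ∀ u, fixProbFrom r wR wM {u} ≤ b) :
    fixProb r wR wM ≤ b := by
  rw [fixProb, div_le_iff₀ (by exact_mod_cast Fintype.card_pos)]
  simpa [mul_comm] using sum_le_sum fun u (_ : u ∈ univ) => h u

end MoranChain

/-- `π_j = γ_1 ⋯ γ_j` for the biases `γ_1 = 1/r`, `γ_k = (k-1)/r` of the dominating chain. -/
noncomputable def biasProd (r : ℝ) : ℕ → ℝ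
  | 0 => 1
  | j + 1 => j.factorial / r ^ (j + 1)

noncomputable def biasSum (r : ℝ) (k : ℕ) : ℝ := ∑ j ∈ range k, biasProd r j

section BirthDeath

variable {r : ℝ}

lemma biasProd_pos (hr : 0 < r) (j : ℕ) : 0 < biasProd r j := by
  cases j <;> simp only [biasProd] <;> positivity

lemma mul_biasProd_one (hr : 0 < r) : r * biasProd r 1 = 1 := by
  simp [biasProd, hr.ne']

lemma mul_biasProd_succ (hr : 0 < r) (m : ℕ) (hm : 1 ≤ m) :
    r * biasProd r (m + 1) = m * biasProd r m := by
  obtain ⟨j, rfl⟩ : ∃ j, m = j + 1 := ⟨m - 1, by omega⟩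
  simp only [biasProd, Nat.factorial_succ, Nat.cast_mul]
  field_simp
  ring

lemma biasSum_succ (r : ℝ) (k : ℕ) : biasSum r (k + 1) = biasSum r k + biasProd r k :=
  sum_range_succ _ _

@[simp]
lemma biasSum_zero (r : ℝ) : biasSum r 0 = 0 := sum_range_zero _

lemma biasSum_one (r : ℝ) : biasSum r 1 = 1 := by simp [biasSum, biasProd]

lemma biasSum_mono (hr : 0 < r) : Monotone (biasSum r) := fun _ _ h =>
  sum_le_sum_of_subset_of_nonneg (range_subset_range.2 h) fun j _ _ => (biasProd_pos hr j).le

lemma biasSum_nonneg (hr : 0 < r) (k : ℕ) : 0 ≤ biasSum r k :=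
  sum_nonneg fun j _ => (biasProd_pos hr j).le

lemma one_div_biasSum_le (hr : 0 < r) {n : ℕ} (hn : 2 ≤ n) :
    1 / biasSum r n ≤ r ^ (n - 1) / (n - 2).factorial := by
  obtain ⟨m, rfl⟩ : ∃ m, n = m + 2 := ⟨n - 2, by omega⟩
  have hlast : biasProd r (m + 1) ≤ biasSum r (m + 2) := by
    rw [biasSum_succ]; linarith [biasSum_nonneg hr (m + 1)]
  calc 1 / biasSum r (m + 2) ≤ 1 / biasProd r (m + 1) :=
        one_div_le_one_div_of_le (biasProd_pos hr _) hlast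
    _ = r ^ (m + 2 - 1) / (m + 2 - 2).factorial := by simp [biasProd]

end BirthDeath

def starRank {α : Type*} [DecidableEq α] (z : α) (S : Finset α) : ℕ :=
  if z ∉ S ∧ 2 ≤ S.card then S.card + 1 else S.card

section StarRank

variable {α : Type*} [DecidableEq α] {z : α} {S : Finset α}

lemma starRank_mono {T : Finset α} (h : S ⊆ T) : starRank z S ≤ starRank z T := by
  have hST := card_le_card h
  unfold starRank
  split_ifs with hS hT hT <;> try omega
  have hzT : z ∈ T := by by_contra hz; exact hT ⟨hz, by omega⟩
  have : S.card < T.card :=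
    card_lt_card (Finset.ssubset_iff_subset_ne.2 ⟨h, fun e => hS.1 (e ▸ hzT)⟩)
  omega

lemma starRank_of_mem (hz : z ∈ S) : starRank z S = S.card := if_neg fun h => h.1 hz

lemma starRank_singleton (u : α) : starRank z {u} = 1 := by simp [starRank]

lemma starRank_insert_center (hz : z ∉ S) : starRank z (insert z S) = S.card + 1 := by
  rw [starRank_of_mem (mem_insert_self z S), card_insert_of_notMem hz]

lemma starRank_of_notMem (hz : z ∉ S) (hS : 2 ≤ S.card) : starRank z S = S.card + 1 :=
  if_pos ⟨hz, hS⟩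

variable {r : ℝ}

lemma biasSum_starRank_erase_sub_nonpos (hr : 0 < r) (i : α) :
    biasSum r (starRank z (S.erase i)) - biasSum r (starRank z S) ≤ 0 :=
  sub_nonpos.2 (biasSum_mono hr (starRank_mono (erase_subset i S)))

lemma sum_biasSum_starRank_erase_sub_le (hr : 0 < r) (hz : z ∈ S) :
    ∑ i ∈ S, (biasSum r (starRank z (S.erase i)) - biasSum r (starRank z S)) ≤
      -(r * biasProd r S.card) := by
  obtain ⟨m, hm⟩ : ∃ m, S.card = m + 1 := ⟨S.card - 1, by have := card_pos.2 ⟨z, hz⟩; omega⟩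
  rcases Nat.eq_zero_or_pos m with rfl | hm1
  · obtain ⟨u, rfl⟩ := card_eq_one.1 hm
    rw [mem_singleton.1 hz, sum_singleton, erase_singleton, starRank_singleton, card_singleton,
      mul_biasProd_one hr, biasSum_one]
    simp [starRank, biasSum]
  · have hleaf : ∀ i ∈ S.erase z,
        biasSum r (starRank z (S.erase i)) - biasSum r (starRank z S) = -biasProd r m := by
      intro i hi
      have hzi : z ∈ S.erase i := mem_erase.2 ⟨fun h => ne_of_mem_erase hi h.symm, hz⟩
      rw [starRank_of_mem hzi, starRank_of_mem hz, card_erase_of_mem (mem_of_mem_erase hi), hm,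
        Nat.add_sub_cancel, biasSum_succ]
      ring
    rw [← add_sum_erase _ _ hz, sum_congr rfl hleaf, sum_const, card_erase_of_mem hz, hm,
      Nat.add_sub_cancel, nsmul_eq_mul, mul_biasProd_succ hr m hm1]
    linarith [biasSum_starRank_erase_sub_nonpos (S := S) (z := z) hr z]

end StarRank

def starCenter {n : ℕ} (hn : 2 ≤ n) : Fin n := ⟨0, by omega⟩

section CliqueStar

variable {n : ℕ}

lemma cliqueW_of_ne {i j : Fin n} (h : i ≠ j) : cliqueW n i j = 1 / ((n : ℝ) - 1) := if_neg h

lemma starW_center (hn : 2 ≤ n) (j : Fin n) :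
    starW n hn (starCenter hn) j = if j = starCenter hn then 0 else 1 / ((n : ℝ) - 1) :=
  if_pos rfl

lemma starW_leaf (hn : 2 ≤ n) {i : Fin n} (hi : i ≠ starCenter hn) (j : Fin n) :
    starW n hn i j = if j = starCenter hn then 1 else 0 :=
  if_neg hi

lemma cast_sub_one_pos (hn : 2 ≤ n) : (0 : ℝ) < (n : ℝ) - 1 := by
  have : (2 : ℝ) ≤ n := by exact_mod_cast hn
  linarith

lemma one_div_sub_one_pos (hn : 2 ≤ n) : (0 : ℝ) < 1 / ((n : ℝ) - 1) :=
  one_div_pos.2 (cast_sub_one_pos hn)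

lemma cliqueW_nonneg (hn : 2 ≤ n) (i j : Fin n) : 0 ≤ cliqueW n i j := by
  unfold cliqueW; split_ifs
  exacts [le_rfl, (one_div_sub_one_pos hn).le]

lemma starW_nonneg (hn : 2 ≤ n) (i j : Fin n) : 0 ≤ starW n hn i j := by
  unfold starW; split_ifs
  exacts [le_rfl, (one_div_sub_one_pos hn).le, zero_le_one, le_rfl]

lemma sum_cliqueW (hn : 2 ≤ n) (i : Fin n) : ∑ j, cliqueW n i j = 1 := by
  have := (cast_sub_one_pos hn).ne'
  rw [← add_sum_erase _ _ (mem_univ i),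
    sum_congr rfl fun j hj => cliqueW_of_ne (ne_of_mem_erase hj).symm]
  simp [cliqueW, card_erase_of_mem, Nat.cast_sub (by omega : 1 ≤ n)]
  field_simp

lemma sum_starW (hn : 2 ≤ n) (i : Fin n) : ∑ j, starW n hn i j = 1 := by
  by_cases hi : i = starCenter hn
  · subst hi
    have := (cast_sub_one_pos hn).ne'
    simp [starW_center, sum_ite, filter_ne', card_erase_of_mem, Nat.cast_sub (by omega : 1 ≤ n)]
    field_simp
  · simp [starW_leaf hn hi]

lemma cliqueW_stronglyConnected (hn : 2 ≤ n) : StronglyConnectedW (cliqueW n) := by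
  intro i j
  rcases eq_or_ne i j with rfl | hij
  · exact .refl
  · exact .single (by rw [cliqueW_of_ne hij]; exact one_div_sub_one_pos hn)

lemma starW_stronglyConnected (hn : 2 ≤ n) : StronglyConnectedW (starW n hn) := by
  have to_center :
      ∀ i, Relation.ReflTransGen (fun a b => 0 < starW n hn a b) i (starCenter hn) := by
    intro i
    rcases eq_or_ne i (starCenter hn) with rfl | hi
    · exact .refl
    · exact .single (by simp [starW_leaf hn hi])
  have from_center :
      ∀ j, Relation.ReflTransGen (fun a b => 0 < starW n hn a b) (starCenter hn) j := by
    intro j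
    rcases eq_or_ne j (starCenter hn) with rfl | hj
    · exact .refl
    · exact .single (by rw [starW_center, if_neg hj]; exact one_div_sub_one_pos hn)
  exact fun i j => (to_center i).trans (from_center j)

lemma sum_sum_cliqueW_mul (S : Finset (Fin n)) (f : Fin n → ℝ) :
    ∑ j ∈ Sᶜ, ∑ i ∈ S, cliqueW n j i * f i = #Sᶜ * (∑ i ∈ S, f i) / ((n : ℝ) - 1) := by
  have hrow : ∀ j ∈ Sᶜ, ∑ i ∈ S, cliqueW n j i * f i = (∑ i ∈ S, f i) / ((n : ℝ) - 1) := by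
    intro j hj
    rw [sum_div]
    refine sum_congr rfl fun i hi => ?_
    rw [cliqueW_of_ne fun h : j = i => mem_compl.1 hj (h ▸ hi), one_div_mul_eq_div]
  rw [sum_congr rfl hrow, sum_const, nsmul_eq_mul, mul_div_assoc]

lemma sum_sum_starW_mul_of_center_mem (hn : 2 ≤ n) {S : Finset (Fin n)} (hz : starCenter hn ∈ S)
    (f : Fin n → ℝ) :
    ∑ i ∈ S, ∑ j ∈ Sᶜ, starW n hn i j * f j = (∑ j ∈ Sᶜ, f j) / ((n : ℝ) - 1) := by
  have hjz : ∀ j ∈ Sᶜ, j ≠ starCenter hn := fun j hj h => mem_compl.1 hj (h ▸ hz)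
  rw [← add_sum_erase _ _ hz, sum_div]
  have hleaves : ∑ i ∈ S.erase (starCenter hn), ∑ j ∈ Sᶜ, starW n hn i j * f j = 0 :=
    sum_eq_zero fun i hi => sum_eq_zero fun j hj => by
      rw [starW_leaf hn (ne_of_mem_erase hi), if_neg (hjz j hj), zero_mul]
  rw [hleaves, add_zero]
  exact sum_congr rfl fun j hj => by rw [starW_center, if_neg (hjz j hj), one_div_mul_eq_div]

lemma sum_sum_starW_mul_of_center_notMem (hn : 2 ≤ n) {S : Finset (Fin n)}
    (hz : starCenter hn ∉ S) (f : Fin n → ℝ) :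
    ∑ i ∈ S, ∑ j ∈ Sᶜ, starW n hn i j * f j = #S * f (starCenter hn) := by
  have hrow : ∀ i ∈ S, ∑ j ∈ Sᶜ, starW n hn i j * f j = f (starCenter hn) := fun i hi => by
    simp [starW_leaf hn (fun h => hz (h ▸ hi)), ite_mul, hz]
  rw [sum_congr rfl hrow, sum_const, nsmul_eq_mul]

variable {r : ℝ} (hn : 2 ≤ n) (φ : Finset (Fin n) → ℝ)

lemma moranDrift_cliqueW_starW_of_center_mem {S : Finset (Fin n)} (hz : starCenter hn ∈ S) :
    moranDrift r (cliqueW n) (starW n hn) φ S =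
      (r * ∑ j ∈ Sᶜ, (φ (insert j S) - φ S) + #Sᶜ * ∑ i ∈ S, (φ (S.erase i) - φ S)) /
        ((n : ℝ) - 1) := by
  simp only [moranDrift, mul_assoc, ← mul_sum, sum_sum_starW_mul_of_center_mem hn hz,
    sum_sum_cliqueW_mul]
  ring

lemma moranDrift_cliqueW_starW_of_center_notMem {S : Finset (Fin n)} (hz : starCenter hn ∉ S) :
    moranDrift r (cliqueW n) (starW n hn) φ S =
      #S * r * (φ (insert (starCenter hn) S) - φ S) +
        #Sᶜ * (∑ i ∈ S, (φ (S.erase i) - φ S)) / ((n : ℝ) - 1) := by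
  simp only [moranDrift, mul_assoc, ← mul_sum, sum_sum_starW_mul_of_center_notMem hn hz,
    sum_sum_cliqueW_mul]
  ring

end CliqueStar

section Potential

variable {n : ℕ} {r : ℝ}

lemma moranDrift_biasSum_starRank_nonpos (hr : 0 < r) (hn : 2 ≤ n) (S : Finset (Fin n)) :
    moranDrift r (cliqueW n) (starW n hn)
      (fun S => biasSum r (starRank (starCenter hn) S)) S ≤ 0 := by
  set z := starCenter hn
  have hN := cast_sub_one_pos hn
  by_cases hz : z ∈ S
  · rw [moranDrift_cliqueW_starW_of_center_mem hn _ hz]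
    have hgain : ∑ j ∈ Sᶜ, (biasSum r (starRank z (insert j S)) - biasSum r (starRank z S)) =
        #Sᶜ * biasProd r #S := by
      rw [sum_congr rfl fun j hj => ?_, sum_const, nsmul_eq_mul]
      rw [starRank_of_mem (mem_insert_of_mem hz), starRank_of_mem hz,
        card_insert_of_notMem (mem_compl.1 hj), biasSum_succ, add_sub_cancel_left]
    have hloss := mul_le_mul_of_nonneg_left (sum_biasSum_starRank_erase_sub_le hr hz)
      (Nat.cast_nonneg (α := ℝ) #Sᶜ)
    refine div_nonpos_of_nonpos_of_nonneg ?_ hN.le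
    rw [hgain]
    linarith
  · rw [moranDrift_cliqueW_starW_of_center_notMem hn _ hz]
    rcases le_or_gt 2 #S with hS | hS
    · rw [starRank_insert_center hz, ← starRank_of_notMem hz hS, sub_self, mul_zero, zero_add]
      exact div_nonpos_of_nonpos_of_nonneg (mul_nonpos_of_nonneg_of_nonpos (Nat.cast_nonneg _)
        (sum_nonpos fun i _ => biasSum_starRank_erase_sub_nonpos hr i)) hN.le
    · interval_cases h : #S
      · simp [card_eq_zero.1 h]
      · obtain ⟨u, rfl⟩ := card_eq_one.1 h
        have hstar : starRank z (∅ : Finset (Fin n)) = 0 := by simp [starRank]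
        rw [card_compl, Fintype.card_fin, h, starRank_insert_center hz, h, sum_singleton,
          erase_singleton, hstar, starRank_singleton, Nat.cast_sub (by omega), biasSum_succ,
          biasSum_one, biasSum_zero]
        have := mul_biasProd_one hr
        push_cast
        field_simp
        linarith

lemma fixProbFrom_singleton_cliqueW_starW_le (hr : 0 < r) (hn : 2 ≤ n) (u : Fin n) :
    fixProbFrom r (cliqueW n) (starW n hn) {u} ≤ 1 / biasSum r n := by
  have : Nonempty (Fin n) := ⟨starCenter hn⟩
  have hpos : 0 < biasSum r n :=
    (biasSum_one r ▸ zero_lt_one).trans_le (biasSum_mono hr (by omega : 1 ≤ n))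
  have h := fixProbFrom_le_div_of_drift_nonpos hr (cliqueW_nonneg hn) (starW_nonneg hn)
    (sum_cliqueW hn) (sum_starW hn) (fun S => biasSum_nonneg hr (starRank (starCenter hn) S))
    (by rwa [starRank_of_mem (mem_univ _), card_univ, Fintype.card_fin])
    (moranDrift_biasSum_starRank_nonpos hr hn) {u}
  rwa [starRank_singleton, biasSum_one, starRank_of_mem (mem_univ _), card_univ,
    Fintype.card_fin] at h

lemma fixProb_cliqueW_starW_le (hr : 0 < r) (hn : 2 ≤ n) :
    fixProb r (cliqueW n) (starW n hn) ≤ r ^ (n - 1) / (n - 2).factorial :=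
  have : Nonempty (Fin n) := ⟨starCenter hn⟩
  fixProb_le fun u =>
    (fixProbFrom_singleton_cliqueW_starW_le hr hn u).trans (one_div_biasSum_le hr hn)

end Potential

open Filter Topology in
lemma tendsto_pow_div_factorial_mul_pow (r a : ℝ) :
    Tendsto (fun m : ℕ => r ^ (m + 2) / (m + 1).factorial * a ^ (m + 3)) atTop (𝓝 0) := by
  have h := ((FloorSemiring.tendsto_pow_div_factorial_atTop (a * r)).comp
    (tendsto_add_atTop_nat 1)).const_mul (a ^ 2 * r)
  rw [mul_zero] at h
  refine h.congr fun m => ?_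
  simp only [Function.comp, mul_pow]
  ring

/-- **An exponentially small fixation probability.** For every constant `r > 0`, the pair
with `G_R` the complete graph and `G_M` the undirected star (both strongly connected) has
fixation probability at most `r^{n−1}/(n−2)!`; in particular there is a constant `a > 1`
such that the fixation probability is `o(a^{−n})`. -/
theorem clique_vs_star_exponentially_small
    (r : ℝ) (hr : 0 < r) :
    (∀ n : ℕ, ∀ hn : 3 ≤ n,
      StronglyConnectedW (cliqueW n) ∧ StronglyConnectedW (starW n (by omega)) ∧
      fixProb r (cliqueW n) (starW n (by omega)) ≤ r ^ (n - 1) / (Nat.factorial (n - 2) : ℝ)) ∧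
    (∃ a : ℝ, 1 < a ∧
      Filter.Tendsto
        (fun n : ℕ => fixProb r (cliqueW (n + 3)) (starW (n + 3) (by omega)) * a ^ (n + 3))
        Filter.atTop (nhds 0)) := by
  refine ⟨fun n hn => ⟨cliqueW_stronglyConnected (by omega), starW_stronglyConnected _,
    fixProb_cliqueW_starW_le hr _⟩, 2, one_lt_two, ?_⟩
  refine squeeze_zero (fun m => mul_nonneg ?_ (by positivity))
    (fun m => mul_le_mul_of_nonneg_right (fixProb_cliqueW_starW_le hr _) (by positivity))
    (tendsto_pow_div_factorial_mul_pow r 2)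
  exact fixProb_nonneg hr.le (cliqueW_nonneg (by omega)) (starW_nonneg _)
end

section
/- Consider a birth-death chain on {0,...,n} with backward biases satisfying γ_k ≥ (1/r)(1 − (k−1)/d) for 1 ≤ k ≤ g(n), where d = d(n) → ∞ and g(n) → ∞ with g(n) = o(d). Then the absorption-at-n probability from state 1 is at most 1 / ( (1 − r^{−g(n)})/(1 − 1/r) − o(1) ), and for constant r > 1 this tends to 1 − 1/r as n → ∞. -/
open Filter Topology Finset

/-!
Every term of the sum `∑_{j=1}^{n-1} ∏_{k=1}^j γ_k` is nonnegative, so it is at least its first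
`g(n)` terms, and there each `γ_k` is at least `q_n = (1/r)(1 - g(n)/d(n))`. Hence the
absorption probability is at most `1 / (1 + ∑_{j=1}^{g(n)} q_n^j)`. Since `g = o(d)` we have
`q_n → 1/r < 1`, and since `g(n) → ∞` the geometric sums tend to `(1/r)/(1 - 1/r) = 1/(r - 1)`,
so the bound tends to `1 - 1/r`.
-/

section GeometricSums

variable {α : Type*} {l : Filter α} {q : α → ℝ} {m : α → ℕ} {a : ℝ}

theorem tendsto_pow_of_tendsto_of_abs_lt_one (hq : Tendsto q l (𝓝 a)) (ha : |a| < 1)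
    (hm : Tendsto m l atTop) : Tendsto (fun x => q x ^ m x) l (𝓝 0) := by
  obtain ⟨c, hac, hc1⟩ := exists_between ha
  have hc0 : 0 ≤ c := (abs_nonneg a).trans hac.le
  have hcm : Tendsto (fun x => c ^ m x) l (𝓝 0) :=
    (tendsto_pow_atTop_nhds_zero_of_lt_one hc0 hc1).comp hm
  refine squeeze_zero_norm' ?_ hcm
  filter_upwards [hq.abs.eventually (gt_mem_nhds hac)] with x hx
  rw [norm_pow, Real.norm_eq_abs]
  exact pow_le_pow_left₀ (abs_nonneg _) hx.le _

theorem sum_Icc_one_pow_eq {x : ℝ} (hx : x ≠ 1) (n : ℕ) :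
    ∑ j ∈ Icc 1 n, x ^ j = (x ^ (n + 1) - x) / (x - 1) := by
  rw [← Ico_add_one_right_eq_Icc, geom_sum_Ico hx (Nat.le_add_left 1 n), pow_one]

theorem tendsto_sum_Icc_one_pow (hq : Tendsto q l (𝓝 a)) (ha : |a| < 1)
    (hm : Tendsto m l atTop) :
    Tendsto (fun x => ∑ j ∈ Icc 1 (m x), q x ^ j) l (𝓝 (a / (1 - a))) := by
  have ha1 : a - 1 ≠ 0 := sub_ne_zero.mpr (abs_lt.mp ha).2.ne
  have hpow : Tendsto (fun x => q x ^ (m x + 1)) l (𝓝 0) :=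
    tendsto_pow_of_tendsto_of_abs_lt_one hq ha (tendsto_atTop_mono (fun x => Nat.le_succ _) hm)
  have hlim : Tendsto (fun x => (q x ^ (m x + 1) - q x) / (q x - 1)) l
      (𝓝 ((0 - a) / (a - 1))) :=
    (hpow.sub hq).div (hq.sub_const 1) ha1
  rw [show a / (1 - a) = (0 - a) / (a - 1) by rw [zero_sub, ← neg_sub, div_neg, neg_div]]
  refine hlim.congr' ?_
  filter_upwards [hq.eventually_ne (abs_lt.mp ha).2.ne] with x hx
  exact (sum_Icc_one_pow_eq hx _).symm

theorem tendsto_one_div_one_add_sum_Icc_one_pow (hq : Tendsto q l (𝓝 a)) (ha : |a| < 1)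
    (hm : Tendsto m l atTop) :
    Tendsto (fun x => 1 / (1 + ∑ j ∈ Icc 1 (m x), q x ^ j)) l (𝓝 (1 - a)) := by
  have ha1 : 1 - a ≠ 0 := sub_ne_zero.mpr (abs_lt.mp ha).2.ne'
  have hlim : 1 / (1 + a / (1 - a)) = 1 - a := by
    field_simp
    ring
  rw [← hlim]
  exact tendsto_const_nhds.div ((tendsto_sum_Icc_one_pow hq ha hm).const_add 1)
    fun h => ha1 (by rw [← hlim, h, div_zero])

end GeometricSums

section ProductSums

variable {γ : ℕ → ℝ} {N : ℕ}

theorem sum_Icc_prod_Icc_nonneg (hγ : ∀ k, 1 ≤ k → k ≤ N → 0 ≤ γ k) :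
    0 ≤ ∑ j ∈ Icc 1 N, ∏ k ∈ Icc 1 j, γ k :=
  sum_nonneg fun j hj => prod_nonneg fun k hk => by grind

theorem sum_Icc_pow_le_sum_Icc_prod {q : ℝ} {m : ℕ} (hmN : m ≤ N) (hq : 0 ≤ q)
    (hγ : ∀ k, 1 ≤ k → k ≤ N → 0 ≤ γ k) (hqγ : ∀ k, 1 ≤ k → k ≤ m → q ≤ γ k) :
    ∑ j ∈ Icc 1 m, q ^ j ≤ ∑ j ∈ Icc 1 N, ∏ k ∈ Icc 1 j, γ k :=
  calc ∑ j ∈ Icc 1 m, q ^ j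
      ≤ ∑ j ∈ Icc 1 m, ∏ k ∈ Icc 1 j, γ k := by
        refine sum_le_sum fun j hj => ?_
        rw [mem_Icc] at hj
        have h : ∏ _k ∈ Icc 1 j, q ≤ ∏ k ∈ Icc 1 j, γ k :=
          prod_le_prod (fun _ _ => hq) fun k hk => hqγ k (mem_Icc.mp hk).1 (by grind)
        simpa using h
    _ ≤ ∑ j ∈ Icc 1 N, ∏ k ∈ Icc 1 j, γ k :=
        sum_le_sum_of_subset_of_nonneg (Icc_subset_Icc_right hmN)
          fun j hj _ => prod_nonneg fun k hk => by grind

end ProductSums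

theorem growing_circulant_vs_clique_upper_bound_general
    (r : ℝ) (hr : 1 < r)
    (d g : ℕ → ℕ)
    (hg : Tendsto (fun n => (g n : ℝ)) atTop atTop)
    (hgo : (fun n => (g n : ℝ)) =o[atTop] fun n => (d n : ℝ))
    (hgn : ∀ n, g n ≤ n - 1)
    (γ : ℕ → ℕ → ℝ)
    (hγpos : ∀ n k, 1 ≤ k → k ≤ n - 1 → 0 < γ n k)
    (hγ : ∀ n k, 1 ≤ k → k ≤ g n →
      γ n k ≥ (1 / r) * (1 - ((k : ℝ) - 1) / (d n : ℝ)))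
    (f : ℕ → ℝ)
    (hf : ∀ n, f n = 1 / (1 + ∑ j ∈ Finset.Icc 1 (n - 1), ∏ k ∈ Finset.Icc 1 j, γ n k)) :
    atTop.limsup f ≤ 1 - 1 / r := by
  set q : ℕ → ℝ := fun n => 1 / r * (1 - (g n : ℝ) / d n)
  have hr0 : 0 < r := one_pos.trans hr
  have hq : Tendsto q atTop (𝓝 (1 / r)) := by
    simpa only [sub_zero, mul_one] using
      (hgo.tendsto_div_nhds_zero.const_sub 1).const_mul (1 / r)
  have hB := tendsto_one_div_one_add_sum_Icc_one_pow hq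
    (by rwa [abs_of_pos (by positivity), div_lt_one hr0]) (tendsto_natCast_atTop_iff.mp hg)
  -- `(k - 1)/d ≤ g/d` holds for every `d ≥ 0`, including the junk case `d = 0`.
  have hqγ : ∀ n k, 1 ≤ k → k ≤ g n → q n ≤ γ n k := fun n k hk hkg =>
    (hγ n k hk hkg).trans' <| by
      change 1 / r * (1 - (g n : ℝ) / d n) ≤ _
      gcongr
      exact (sub_le_self _ zero_le_one).trans (by exact_mod_cast hkg)
  have hfB : ∀ᶠ n in atTop, f n ≤ 1 / (1 + ∑ j ∈ Icc 1 (g n), q n ^ j) := by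
    filter_upwards [hq.eventually (lt_mem_nhds (by positivity : (0 : ℝ) < 1 / r))] with n hqn
    rw [hf n]
    gcongr
    exact sum_Icc_pow_le_sum_Icc_prod (hgn n) hqn.le
      (fun k hk hkn => (hγpos n k hk hkn).le) (hqγ n)
  have hf0 : ∀ n, 0 ≤ f n := fun n => by
    rw [hf n]
    have := sum_Icc_prod_Icc_nonneg fun k hk hkn => (hγpos n k hk hkn).le
    positivity
  exact (limsup_le_limsup hfB (isCoboundedUnder_le_of_le atTop hf0)
    hB.isBoundedUnder_le).trans_eq hB.limsup_eq

/-- **Growing-degree circulant vs Clique: upper bound.**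
Consider, for each `n`, a birth-death chain on `{0,...,n}` with positive backward biases
satisfying `γ n k ≥ (1/r)(1 − (k−1)/d n)` for `1 ≤ k ≤ g n`, where `d n → ∞`, `g n → ∞`
and `g = o(d)`. Then for constant `r > 1` the absorption-at-`n` probability from state `1`
satisfies `limsup_{n→∞} f n ≤ 1 − 1/r`. -/
theorem growing_circulant_vs_clique_upper_bound
    (r : ℝ) (hr : 1 < r)
    (d g : ℕ → ℕ)
    (hd : Tendsto (fun n => (d n : ℝ)) atTop atTop)
    (hg : Tendsto (fun n => (g n : ℝ)) atTop atTop)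
    (hgo : (fun n => (g n : ℝ)) =o[atTop] fun n => (d n : ℝ))
    (hgn : ∀ n, g n ≤ n - 1)
    (γ : ℕ → ℕ → ℝ)
    (hγpos : ∀ n k, 1 ≤ k → k ≤ n - 1 → 0 < γ n k)
    (hγ : ∀ n k, 1 ≤ k → k ≤ g n →
      γ n k ≥ (1 / r) * (1 - ((k : ℝ) - 1) / (d n : ℝ)))
    (f : ℕ → ℝ)
    (hf : ∀ n, f n = 1 / (1 + ∑ j ∈ Finset.Icc 1 (n - 1), ∏ k ∈ Finset.Icc 1 j, γ n k)) :
    atTop.limsup f ≤ 1 - 1 / r :=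
  growing_circulant_vs_clique_upper_bound_general r hr d g hg hgo hgn γ hγpos hγ f hf
end

section
/- Consider a birth-death chain on {0,...,n} (n even) with backward biases γ_k ≤ (1/r)·(n−1)/(n−k) for 1 ≤ k ≤ ⌈n/2⌉ and γ_k = (1/r)·(n−1)/k for ⌈n/2⌉+1 ≤ k ≤ n−1, where r > 2. Then the absorption-at-n probability from state 1 is at least [ (1−(1/r)^{log n})/(1−1/r)·(1+o(1)) + (2/r)^{log n}·(1−(2/r)^{n−log n})/(1−2/r) ]^{−1}, which tends to 1 − 1/r as n → ∞. -/
/-!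
Both regimes of the hypotheses bound `γ m k` by the envelope
`cliqueBias r m k = (1/r)(2m-1)/max(2m-k, k)`, which is at most `2/r < 1` and tends to `1/r`
for each fixed `k`. Hence `1 + ∑_j ∏_{k ≤ j} γ m k ≤ ∑'_j ∏_{k ≤ j} cliqueBias r m k`, and by
Tannery's theorem, with the summable majorant `(2/r)^j`, the right-hand side tends to
`∑_j (1/r)^j = (1 - 1/r)⁻¹`.
-/

open Filter Finset Topology

theorem abs_prod_Icc_le_pow {g : ℕ → ℝ} {d : ℝ} (hg : ∀ k, |g k| ≤ d) (j : ℕ) :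
    |∏ k ∈ Icc 1 j, g k| ≤ d ^ j := by
  rw [abs_prod]
  simpa using prod_le_prod (fun k _ => abs_nonneg (g k)) fun k (_ : k ∈ Icc 1 j) => hg k

theorem summable_prod_Icc_of_abs_le {g : ℕ → ℝ} {d : ℝ} (hg : ∀ k, |g k| ≤ d) (hd : d < 1) :
    Summable fun j => ∏ k ∈ Icc 1 j, g k :=
  Summable.of_norm_bounded (summable_geometric_of_lt_one ((abs_nonneg _).trans (hg 0)) hd)
    (abs_prod_Icc_le_pow hg)

theorem tendsto_tsum_prod_Icc {α : Type*} {l : Filter α} [l.NeBot] {g : α → ℕ → ℝ} {c d : ℝ}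
    (hlim : ∀ k, Tendsto (g · k) l (𝓝 c)) (hg : ∀ᶠ a in l, ∀ k, |g a k| ≤ d) (hd : d < 1) :
    Tendsto (fun a => ∑' j, ∏ k ∈ Icc 1 j, g a k) l (𝓝 (1 - c)⁻¹) := by
  have hc : |c| ≤ d := le_of_tendsto ((hlim 0).abs) (hg.mono fun a h => h 0)
  obtain ⟨a, ha⟩ := hg.exists
  have hd0 : 0 ≤ d := (abs_nonneg _).trans (ha 0)
  rw [← tsum_geometric_of_abs_lt_one (hc.trans_lt hd)]
  refine tendsto_tsum_of_dominated_convergence (summable_geometric_of_lt_one hd0 hd)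
    (fun j => ?_) (hg.mono fun a h j => abs_prod_Icc_le_pow h j)
  simpa using tendsto_finsetProd (Icc 1 j) fun k _ => hlim k

theorem one_add_sum_prod_Icc_le_tsum {γ g : ℕ → ℝ} {N : ℕ}
    (hγ : ∀ k ∈ Icc 1 N, 0 ≤ γ k ∧ γ k ≤ g k) (hg : ∀ k, 0 ≤ g k)
    (hsum : Summable fun j => ∏ k ∈ Icc 1 j, g k) :
    1 + ∑ j ∈ Icc 1 N, ∏ k ∈ Icc 1 j, γ k ≤ ∑' j, ∏ k ∈ Icc 1 j, g k := by
  have hprod : ∀ j ∈ Icc 1 N, ∏ k ∈ Icc 1 j, γ k ≤ ∏ k ∈ Icc 1 j, g k := fun j hj =>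
    prod_le_prod (fun k hk => (hγ k (Icc_subset_Icc_right (mem_Icc.1 hj).2 hk)).1)
      fun k hk => (hγ k (Icc_subset_Icc_right (mem_Icc.1 hj).2 hk)).2
  calc 1 + ∑ j ∈ Icc 1 N, ∏ k ∈ Icc 1 j, γ k
      ≤ ∏ k ∈ Icc 1 0, g k + ∑ j ∈ Icc 1 N, ∏ k ∈ Icc 1 j, g k := by
        simpa using sum_le_sum hprod
    _ = ∑ j ∈ range (N + 1), ∏ k ∈ Icc 1 j, g k := by
        rw [range_eq_Ico, sum_eq_sum_Ico_succ_bot N.succ_pos, zero_add, Nat.succ_eq_add_one,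
          Ico_add_one_right_eq_Icc]
    _ ≤ ∑' j, ∏ k ∈ Icc 1 j, g k :=
        hsum.sum_le_tsum _ fun j _ => prod_nonneg fun k _ => hg k

theorem le_max_two_mul_sub (a b : ℝ) : a ≤ max (2 * a - b) b := by
  rcases le_total b a with h | h
  · exact (by linarith : a ≤ 2 * a - b).trans (le_max_left _ _)
  · exact h.trans (le_max_right _ _)

noncomputable def cliqueBias (r : ℝ) (m k : ℕ) : ℝ :=
  1 / r * ((2 * m : ℝ) - 1) / max ((2 * m : ℝ) - k) k

section

variable {r : ℝ} {m k : ℕ}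

theorem cliqueBias_of_le (h : k ≤ m) :
    cliqueBias r m k = 1 / r * ((2 * m : ℝ) - 1) / ((2 * m : ℝ) - k) := by
  have : (k : ℝ) ≤ m := by exact_mod_cast h
  rw [cliqueBias, max_eq_left (by linarith)]

theorem cliqueBias_of_lt (h : m < k) :
    cliqueBias r m k = 1 / r * ((2 * m : ℝ) - 1) / k := by
  have : (m : ℝ) < k := by exact_mod_cast h
  rw [cliqueBias, max_eq_right (by linarith)]

theorem cliqueBias_nonneg (hr : 0 ≤ r) (hm : 1 ≤ m) : 0 ≤ cliqueBias r m k := by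
  have hm' : (1 : ℝ) ≤ m := by exact_mod_cast hm
  have := le_max_two_mul_sub (m : ℝ) k
  unfold cliqueBias
  exact div_nonneg (mul_nonneg (by positivity) (by linarith)) (by linarith)

theorem cliqueBias_le (hr : 0 ≤ r) (hm : 1 ≤ m) : cliqueBias r m k ≤ 2 / r := by
  have hm' : (1 : ℝ) ≤ m := by exact_mod_cast hm
  have hmax := le_max_two_mul_sub (m : ℝ) k
  have : ((2 * m : ℝ) - 1) / max ((2 * m : ℝ) - k) k ≤ 2 := by
    rw [div_le_iff₀ (by linarith)]; linarith
  calc cliqueBias r m k = 1 / r * (((2 * m : ℝ) - 1) / max ((2 * m : ℝ) - k) k) :=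
        mul_div_assoc _ _ _
    _ ≤ 1 / r * 2 := by gcongr
    _ = 2 / r := by ring

theorem tendsto_cliqueBias (r : ℝ) (k : ℕ) :
    Tendsto (cliqueBias r · k) atTop (𝓝 (1 / r)) := by
  have hden : Tendsto (fun m : ℕ => (2 * m : ℝ) - k) atTop atTop :=
    tendsto_atTop_add_const_right _ _
      (tendsto_natCast_atTop_atTop.const_mul_atTop two_pos)
  have hratio : Tendsto (fun m : ℕ => 1 + ((k : ℝ) - 1) / ((2 * m : ℝ) - k)) atTop (𝓝 1) := by
    simpa using (tendsto_const_nhds.div_atTop hden).const_add 1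
  have := hratio.const_mul (1 / r)
  rw [mul_one] at this
  refine this.congr' ?_
  filter_upwards [eventually_gt_atTop k] with m hm
  have : (k : ℝ) < m := by exact_mod_cast hm
  have hne : (2 * m : ℝ) - k ≠ 0 := by linarith
  rw [cliqueBias_of_le hm.le, mul_div_assoc]
  congr 1
  field_simp
  ring

end

/-- **Undirected Cycle vs Clique: lower bound.**
Consider, for each even `n = 2m`, a birth-death chain on `{0,...,n}` with positive backward
biases satisfying `γ k ≤ (1/r)(n−1)/(n−k)` for `1 ≤ k ≤ n/2` and `γ k = (1/r)(n−1)/k` for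
`n/2 + 1 ≤ k ≤ n−1`, where `r > 2` is constant. Then the absorption-at-`n` probability from
state `1` satisfies `liminf_{m→∞} f m ≥ 1 − 1/r`. -/
theorem cycle_vs_clique_lower_bound
    (r : ℝ) (hr : 2 < r)
    (γ : ℕ → ℕ → ℝ)
    (hγpos : ∀ m k, 1 ≤ k → k ≤ 2 * m - 1 → 0 < γ m k)
    (hγ1 : ∀ m k, 1 ≤ k → k ≤ m →
      γ m k ≤ (1 / r) * ((2 * m : ℝ) - 1) / ((2 * m : ℝ) - k))
    (hγ2 : ∀ m k, m + 1 ≤ k → k ≤ 2 * m - 1 →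
      γ m k = (1 / r) * ((2 * m : ℝ) - 1) / (k : ℝ))
    (f : ℕ → ℝ)
    (hf : ∀ m, f m =
      1 / (1 + ∑ j ∈ Finset.Icc 1 (2 * m - 1), ∏ k ∈ Finset.Icc 1 j, γ m k)) :
    atTop.liminf f ≥ 1 - 1 / r := by
  have hr0 : 0 ≤ r := by linarith
  have hd : 2 / r < 1 := (div_lt_one (by linarith)).2 hr
  have hc : 1 / r < 1 := (div_lt_one (by linarith)).2 (by linarith)
  have habs : ∀ m, 1 ≤ m → ∀ k, |cliqueBias r m k| ≤ 2 / r := fun m hm k =>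
    (abs_of_nonneg (cliqueBias_nonneg hr0 hm)).trans_le (cliqueBias_le hr0 hm)
  have hγg : ∀ m, ∀ k ∈ Icc 1 (2 * m - 1), 0 ≤ γ m k ∧ γ m k ≤ cliqueBias r m k := by
    intro m k hk
    obtain ⟨hk1, hk2⟩ := mem_Icc.1 hk
    refine ⟨(hγpos m k hk1 hk2).le, ?_⟩
    rcases le_or_gt k m with hkm | hkm
    · exact (cliqueBias_of_le hkm).symm ▸ hγ1 m k hk1 hkm
    · exact ((cliqueBias_of_lt hkm).trans (hγ2 m k hkm hk2).symm).ge
  have hS : ∀ m, 0 ≤ ∑ j ∈ Icc 1 (2 * m - 1), ∏ k ∈ Icc 1 j, γ m k := fun m =>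
    sum_nonneg fun j hj => prod_nonneg fun k hk =>
      (hγg m k (Icc_subset_Icc_right (mem_Icc.1 hj).2 hk)).1
  set T : ℕ → ℝ := fun m => ∑' j, ∏ k ∈ Icc 1 j, cliqueBias r m k
  have hT : Tendsto (fun m => (T m)⁻¹) atTop (𝓝 (1 - 1 / r)) := by
    simpa using (tendsto_tsum_prod_Icc (tendsto_cliqueBias r)
      ((eventually_ge_atTop 1).mono habs) hd).inv₀ (inv_ne_zero (sub_ne_zero.2 hc.ne'))
  have hlow : ∀ᶠ m in atTop, (T m)⁻¹ ≤ f m := by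
    filter_upwards [eventually_ge_atTop 1] with m hm
    rw [hf m, one_div]
    exact inv_anti₀ (by linarith [hS m]) (one_add_sum_prod_Icc_le_tsum (hγg m)
      (fun k => cliqueBias_nonneg hr0 hm) (summable_prod_Icc_of_abs_le (habs m hm) hd))
  have hf1 : ∀ m, f m ≤ 1 := fun m => by
    rw [hf m]; exact div_le_one_of_le₀ (by linarith [hS m]) (by linarith [hS m])
  calc 1 - 1 / r = liminf (fun m => (T m)⁻¹) atTop := hT.liminf_eq.symm
    _ ≤ liminf f atTop := liminf_le_liminf hlow hT.isBoundedUnder_ge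
        (isBoundedUnder_of ⟨1, hf1⟩).isCoboundedUnder_ge
end

section
/- Let (X_i) be the two-graph Moran process where the resident graph G_R is undirected with max edge weight ratio c = max_{(xy)∈E_R} w^R_{xy}/w^R_{yx} and the mutant graph is the complete graph on n vertices, n ≥ 6. If r ≥ 2c(1 + 2/(n−5)), then for every nonempty proper mutant set S, the expected one-step change in the number of mutants satisfies E[|X_{i+1}| − |X_i| | X_i = S] ≥ (1 − c/r)/n > 0. -/
open Finset

variable {V : Type*} [Fintype V] [DecidableEq V]

/-!
The expected change in the number of mutants is the mutant gain across the cut `(S, Sᶜ)`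
minus the resident loss, divided by the total fitness `F(S) = |S| r + n - |S| ≤ r n`. On the
complete graph the gain is `r |S| |Sᶜ| / (n - 1)`. The loss is at most `|Sᶜ|`, since rows of
`wR` sum to `1`, and at most `c |S|`, since each weight into `S` is at most `c` times the
reverse weight out of `S`; and `c ≥ 1` because some edge carries weight in both directions.
The condition on `r` makes `r |S| |Sᶜ| / (n - 1) - c min(|S|, |Sᶜ|) ≥ r - c`.
-/

lemma sum_sum_sum_ite_eq_mul {α β : Type*} (s : Finset α) (t : Finset β)
    (f : α → β → Finset V) (a : α → β → ℝ) (g : Finset V → ℝ) :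
    ∑ T : Finset V, (∑ i ∈ s, ∑ j ∈ t, if T = f i j then a i j else 0) * g T =
      ∑ i ∈ s, ∑ j ∈ t, a i j * g (f i j) := by
  simp only [Finset.sum_mul, ite_mul, zero_mul]
  rw [Finset.sum_comm]
  refine Finset.sum_congr rfl fun i _ => ?_
  rw [Finset.sum_comm]
  simp

lemma sum_moranStep_mul_card_sub (r : ℝ) (wR wM : V → V → ℝ) (S : Finset V) :
    ∑ T : Finset V, moranStep r wR wM S T * ((T.card : ℝ) - S.card) =
      (r * ∑ i ∈ S, ∑ j ∈ Sᶜ, wM i j - ∑ j ∈ Sᶜ, ∑ i ∈ S, wR j i) /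
        (S.card * r + ((Fintype.card V : ℝ) - S.card)) := by
  simp only [moranStep, div_mul_eq_mul_div, ← Finset.sum_div, add_mul, Finset.sum_add_distrib,
    sum_sum_sum_ite_eq_mul, ite_mul, zero_mul, Finset.sum_ite_eq', Finset.mem_univ, if_true,
    sub_self, mul_zero, add_zero, Finset.mul_sum]
  congr 1
  have gain : ∀ j ∈ Sᶜ, ((insert j S).card : ℝ) - S.card = 1 := fun j hj => by
    rw [Finset.card_insert_of_notMem (Finset.mem_compl.mp hj)]; push_cast; ring
  have loss : ∀ i ∈ S, ((S.erase i).card : ℝ) - S.card = -1 := fun i hi => by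
    rw [Finset.cast_card_erase_of_mem hi]; ring
  rw [sub_eq_add_neg, ← Finset.sum_neg_distrib]
  congr 1
  · exact Finset.sum_congr rfl fun i _ =>
      Finset.sum_congr rfl fun j hj => by rw [gain j hj, mul_one]
  · refine Finset.sum_congr rfl fun j _ => ?_
    rw [← Finset.sum_neg_distrib]
    exact Finset.sum_congr rfl fun i hi => by rw [loss i hi, mul_neg_one]

namespace IsWeightMatrix

variable {ι : Type*} [Fintype ι] {w : ι → ι → ℝ}

lemma sum_sum_le_card (hw : IsWeightMatrix w) (s t : Finset ι) :
    ∑ i ∈ s, ∑ j ∈ t, w i j ≤ s.card := by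
  obtain ⟨hnonneg, -, hrow⟩ := hw
  calc ∑ i ∈ s, ∑ j ∈ t, w i j ≤ ∑ i ∈ s, ∑ j, w i j :=
        Finset.sum_le_sum fun i _ =>
          Finset.sum_le_sum_of_subset_of_nonneg (Finset.subset_univ t) fun j _ _ => hnonneg i j
    _ = s.card := by simp [hrow]

lemma one_le_of_ratio_le [Nonempty ι] (hw : IsWeightMatrix w) {c : ℝ}
    (hundir : ∀ i j, 0 < w i j ↔ 0 < w j i) (hratio : ∀ i j, 0 < w i j → w i j / w j i ≤ c) :
    1 ≤ c := by
  obtain ⟨hnonneg, -, hrow⟩ := hw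
  obtain ⟨i⟩ := ‹Nonempty ι›
  obtain ⟨j, hij⟩ : ∃ j, 0 < w i j := by
    by_contra! h
    have : ∑ j, w i j = 0 := Finset.sum_eq_zero fun j _ => le_antisymm (h j) (hnonneg i j)
    simp [hrow i] at this
  have hji : 0 < w j i := (hundir i j).mp hij
  have h₁ := (div_le_iff₀ hji).mp (hratio i j hij)
  have h₂ := (div_le_iff₀ hij).mp (hratio j i hji)
  nlinarith

lemma le_mul_swap (hw : IsWeightMatrix w) {c : ℝ} (hc : 0 ≤ c)
    (hundir : ∀ i j, 0 < w i j ↔ 0 < w j i) (hratio : ∀ i j, 0 < w i j → w i j / w j i ≤ c)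
    (i j : ι) : w i j ≤ c * w j i := by
  rcases (hw.1 i j).eq_or_lt with h | h
  · rw [← h]; exact mul_nonneg hc (hw.1 j i)
  · exact (div_le_iff₀ ((hundir i j).mp h)).mp (hratio i j h)

lemma sum_compl_sum_le_mul_min [DecidableEq ι] (hw : IsWeightMatrix w) {c : ℝ} (hc : 1 ≤ c)
    (hundir : ∀ i j, 0 < w i j ↔ 0 < w j i) (hratio : ∀ i j, 0 < w i j → w i j / w j i ≤ c)
    (S : Finset ι) :
    ∑ j ∈ Sᶜ, ∑ i ∈ S, w j i ≤ c * min (S.card : ℝ) Sᶜ.card := by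
  rcases le_total (S.card : ℝ) Sᶜ.card with h | h
  · rw [min_eq_left h]
    calc ∑ j ∈ Sᶜ, ∑ i ∈ S, w j i ≤ ∑ j ∈ Sᶜ, ∑ i ∈ S, c * w i j :=
          Finset.sum_le_sum fun j _ => Finset.sum_le_sum fun i _ =>
            hw.le_mul_swap (by linarith) hundir hratio j i
      _ = c * ∑ i ∈ S, ∑ j ∈ Sᶜ, w i j := by
          rw [Finset.sum_comm]; simp only [Finset.mul_sum]
      _ ≤ c * S.card := by gcongr; exact hw.sum_sum_le_card S Sᶜ
  · rw [min_eq_right h]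
    calc ∑ j ∈ Sᶜ, ∑ i ∈ S, w j i ≤ Sᶜ.card := hw.sum_sum_le_card Sᶜ S
      _ ≤ c * Sᶜ.card := le_mul_of_one_le_left (Nat.cast_nonneg _) hc

end IsWeightMatrix

lemma sum_sum_compl_of_offDiag_eq {w : V → V → ℝ} {a : ℝ} (hw : ∀ i j, i ≠ j → w i j = a)
    (S : Finset V) : ∑ i ∈ S, ∑ j ∈ Sᶜ, w i j = S.card * Sᶜ.card * a := by
  have hcut : ∀ i ∈ S, ∀ j ∈ Sᶜ, w i j = a := fun i hi j hj =>
    hw i j fun h => Finset.mem_compl.mp hj (h ▸ hi)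
  rw [Finset.sum_congr rfl fun i hi => Finset.sum_congr rfl (hcut i hi)]
  simp [mul_assoc]

lemma sub_le_mul_div_sub_mul_of_le {n A B c r : ℝ} (hn : 6 ≤ n) (hA : 1 ≤ A) (hAB : A ≤ B)
    (hsum : A + B = n) (hc : 0 ≤ c) (hr : 2 * c * (1 + 2 / (n - 5)) ≤ r) :
    r - c ≤ r * A * B / (n - 1) - c * A := by
  have hn5 : 0 < n - 5 := by linarith
  have hr' : 2 * c * (n - 3) ≤ r * (n - 5) := by
    have := mul_le_mul_of_nonneg_right hr hn5.le
    rwa [mul_assoc, add_mul, div_mul_cancel₀ _ hn5.ne', one_mul,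
      show n - 5 + 2 = n - 3 by ring] at this
  have hB : c * (n - 1) ≤ r * (B - 1) := by
    refine le_of_mul_le_mul_right ?_ hn5
    calc c * (n - 1) * (n - 5) ≤ c * (n - 3) * (n - 2) := by nlinarith
      _ ≤ 2 * c * (n - 3) * (B - 1) := by
        nlinarith [mul_nonneg hc (by linarith : (0 : ℝ) ≤ n - 3)]
      _ ≤ r * (n - 5) * (B - 1) := by nlinarith
      _ = r * (B - 1) * (n - 5) := by ring
  rw [le_sub_iff_add_le, le_div_iff₀ (by linarith)]
  -- `r A B - (r - c + c A)(n - 1) = (A - 1)(r (B - 1) - c (n - 1))`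
  nlinarith [mul_nonneg (sub_nonneg.mpr hA) (sub_nonneg.mpr hB)]

lemma sub_le_mul_div_sub_mul_min {n K M c r : ℝ} (hn : 6 ≤ n) (hK : 1 ≤ K) (hM : 1 ≤ M)
    (hsum : K + M = n) (hc : 0 ≤ c) (hr : 2 * c * (1 + 2 / (n - 5)) ≤ r) :
    r - c ≤ r * K * M / (n - 1) - c * min K M := by
  have := sub_le_mul_div_sub_mul_of_le hn (le_min hK hM) min_le_max
    (by rw [min_add_max, hsum]) hc hr
  rwa [mul_assoc r, min_mul_max, ← mul_assoc] at this

theorem moran_drift_lemma_general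
    {V : Type*} [Fintype V] [DecidableEq V]
    (hn : 6 ≤ Fintype.card V)
    (c r : ℝ)
    (hr : r ≥ 2 * c * (1 + 2 / ((Fintype.card V : ℝ) - 5)))
    (wR wM : V → V → ℝ)
    (hwR : IsWeightMatrix wR)
    (hundir : ∀ i j, 0 < wR i j ↔ 0 < wR j i)
    (hratio : ∀ i j, 0 < wR i j → wR i j / wR j i ≤ c)
    (hwM : ∀ i j, wM i j = if i = j then 0 else 1 / ((Fintype.card V : ℝ) - 1))
    (S : Finset V) (hS : S.Nonempty) (hS' : S ≠ Finset.univ) :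
    (0 : ℝ) < (1 - c / r) / (Fintype.card V : ℝ) ∧
    (∑ T : Finset V, moranStep r wR wM S T * ((T.card : ℝ) - (S.card : ℝ))) ≥
      (1 - c / r) / (Fintype.card V : ℝ) := by
  set n := Fintype.card V
  have hn' : (6 : ℝ) ≤ n := by exact_mod_cast hn
  have : Nonempty V := Fintype.card_pos_iff.mp (by omega)
  have hc : 1 ≤ c := hwR.one_le_of_ratio_le hundir hratio
  have hcr : c < r := by
    have : 0 ≤ 2 / ((n : ℝ) - 5) := div_nonneg zero_le_two (by linarith)
    nlinarith
  have hK : 1 ≤ (S.card : ℝ) := by exact_mod_cast hS.card_pos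
  have hM : 1 ≤ (Sᶜ.card : ℝ) := by
    exact_mod_cast ((compl_ne_univ_iff_nonempty Sᶜ).mp (by rwa [compl_compl])).card_pos
  have hKM : (S.card : ℝ) + Sᶜ.card = n := by exact_mod_cast Finset.card_add_card_compl S
  have hgain : r * ∑ i ∈ S, ∑ j ∈ Sᶜ, wM i j = r * S.card * Sᶜ.card / (n - 1) := by
    rw [sum_sum_compl_of_offDiag_eq (fun i j h => by rw [hwM, if_neg h]) S]; ring
  have hdrift := sub_le_mul_div_sub_mul_min hn' hK hM hKM (by linarith) hr
  have hloss := hwR.sum_compl_sum_le_mul_min hc hundir hratio S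
  have hF : 0 < S.card * r + ((n : ℝ) - S.card) := by nlinarith
  have hFle : S.card * r + ((n : ℝ) - S.card) ≤ r * n := by nlinarith
  refine ⟨div_pos (by rw [sub_pos, div_lt_one (by linarith)]; exact hcr) (by linarith), ?_⟩
  rw [sum_moranStep_mul_card_sub, ge_iff_le, hgain]
  calc (1 - c / r) / n = (r - c) / (r * n) := by
        rw [one_sub_div (by linarith), div_div]
    _ ≤ (r - c) / (S.card * r + ((n : ℝ) - S.card)) :=
        div_le_div_of_nonneg_left (by linarith) hF hFle
    _ ≤ _ := div_le_div_of_nonneg_right (by linarith) hF.le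

/-- **Drift lemma.** For the two-graph Moran process with undirected resident graph `wR`
whose adjacent weight ratios are at most `c`, and mutant graph the complete graph on
`n ≥ 6` vertices, if `r ≥ 2c(1 + 2/(n−5))` then for every nonempty proper mutant set `S`
the expected one-step change in the number of mutants is at least `(1 − c/r)/n > 0`. -/
theorem moran_drift_lemma
    {V : Type*} [Fintype V] [DecidableEq V]
    (hn : 6 ≤ Fintype.card V)
    (c r : ℝ) (hc : 0 < c)
    (hr : r ≥ 2 * c * (1 + 2 / ((Fintype.card V : ℝ) - 5)))
    (wR wM : V → V → ℝ)
    (hwR : IsWeightMatrix wR)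
    (hundir : ∀ i j, 0 < wR i j ↔ 0 < wR j i)
    (hratio : ∀ i j, 0 < wR i j → wR i j / wR j i ≤ c)
    (hwM : ∀ i j, wM i j = if i = j then 0 else 1 / ((Fintype.card V : ℝ) - 1))
    (S : Finset V) (hS : S.Nonempty) (hS' : S ≠ Finset.univ) :
    (0 : ℝ) < (1 - c / r) / (Fintype.card V : ℝ) ∧
    (∑ T : Finset V, moranStep r wR wM S T * ((T.card : ℝ) - (S.card : ℝ))) ≥
      (1 - c / r) / (Fintype.card V : ℝ) :=
  moran_drift_lemma_general hn c r hr wR wM hwR hundir hratio hwM S hS hS'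
end
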